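/- arXiv:2006.03493 — 7 statements merged into one kernel-verified Lean document; each statement's English description precedes it below -/
import Mathlib

section
/- Let Γ = (k, A, B, C, D, E) and Γ' = (k', A', B', C', D', E') be tuples of matrices over the field F₂ with A : k×k, B : m×n, C : m×k, D : k×n, E : k×k (upper triangular data), and similarly for Γ'. Define composition by Γ' ∘ Γ = (k+k', A + B A' Bᵀ, B B', (C + B(A'+A'ᵀ)Dᵀ | B C'), (D B' stacked above D'), block matrix [[E + D A' Dᵀ, D C'],[0, E']]). Then this composition is associative: for compatible Γ, Γ', Γ'', the matrices defining Γ'' ∘ (Γ' ∘ Γ) and (Γ'' ∘ Γ') ∘ Γ agree up to replacing a matrix M by a matrix with the same value of M + Mᵀ on off-diagonal blocks (i.e., they represent the same class under the equivalence that identifies matrices whose strictly-upper-triangular reductions coincide). In particular, the first component A + B(A' + B' A'' B'ᵀ)Bᵀ, the B-component B B' B'', the C-component, the D-component, and the E-component class of both sides coincide. -/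
/-!
Reassociating the internal vertex sets `κ ⊕ (κ' ⊕ κ'') ≃ (κ ⊕ κ') ⊕ κ''`, the A-, B-, C- and
D-components of both bracketings agree exactly: after distributing the products, each block is
the same sum of words in the data. The E-components do not. Bracketed as `Γ'' ∘ (Γ' ∘ Γ)`, the
`A''`-terms contribute `D B' A'' D'ᵀ` above the diagonal and its transposed partner
`D' A'' B'ᵀ Dᵀ` below it; bracketed as `(Γ'' ∘ Γ') ∘ Γ`, they contribute
`D B' (A'' + A''ᵀ) D'ᵀ` above the diagonal and nothing below. The difference is a skew matrix with
zero diagonal, which `[·]` does not see.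
-/

open Matrix

/-- Open-graph tuples over F₂ = ZMod 2: a tuple (A, B, C, D, E) representing a
morphism with row object `μ`, column object `ν` and internal vertex set `κ`. -/
structure OGTuple (μ ν κ : Type) where
  A : Matrix μ μ (ZMod 2)
  B : Matrix μ ν (ZMod 2)
  C : Matrix μ κ (ZMod 2)
  D : Matrix κ ν (ZMod 2)
  E : Matrix κ κ (ZMod 2)

/-- Composition of open-graph tuples (Γ first, then Γ'). -/
def ogComp {μ ν ρ κ κ' : Type} [Fintype ν] (Γ : OGTuple μ ν κ) (Γ' : OGTuple ν ρ κ') :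
    OGTuple μ ρ (κ ⊕ κ') where
  A := Γ.A + Γ.B * Γ'.A * Γ.Bᵀ
  B := Γ.B * Γ'.B
  C := Matrix.fromCols (Γ.C + Γ.B * (Γ'.A + Γ'.Aᵀ) * Γ.Dᵀ) (Γ.B * Γ'.C)
  D := Matrix.fromRows (Γ.D * Γ'.B) Γ'.D
  E := Matrix.fromBlocks (Γ.E + Γ.D * Γ'.A * Γ.Dᵀ) (Γ.D * Γ'.C) 0 Γ'.E

/-- The relation `[A] = [A']` of the paper. -/
def MatRel {ι : Type} (A A' : Matrix ι ι (ZMod 2)) : Prop :=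
  A + Aᵀ = A' + A'ᵀ ∧ ∀ i, A i i = A' i i

namespace Matrix

variable {R : Type*} {l m n o : Type*}

lemma fromCols_add_fromCols [Add R] (A C : Matrix o l R) (B D : Matrix o m R) :
    fromCols A B + fromCols C D = fromCols (A + C) (B + D) := by
  ext i (j | j) <;> rfl

lemma fromRows_add_fromRows [Add R] (A C : Matrix l o R) (B D : Matrix m o R) :
    fromRows A B + fromRows C D = fromRows (A + C) (B + D) := by
  ext (i | i) j <;> rfl

lemma fromCols_fromCols_submatrix_sumAssoc (M : Matrix o l R) (N : Matrix o m R)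
    (P : Matrix o n R) :
    (fromCols M (fromCols N P)).submatrix id (Equiv.sumAssoc l m n) =
      fromCols (fromCols M N) P := by
  ext i ((j | j) | j) <;> rfl

lemma fromRows_fromRows_submatrix_sumAssoc (M : Matrix l o R) (N : Matrix m o R)
    (P : Matrix n o R) :
    (fromRows M (fromRows N P)).submatrix (Equiv.sumAssoc l m n) id =
      fromRows (fromRows M N) P := by
  ext ((i | i) | i) j <;> rfl

lemma fromBlocks_fromBlocks_submatrix_sumAssoc (P : Matrix l l R) (Q₁ : Matrix l m R)
    (Q₂ : Matrix l n R) (R₁ : Matrix m l R) (R₂ : Matrix n l R) (S₁₁ : Matrix m m R)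
    (S₁₂ : Matrix m n R) (S₂₁ : Matrix n m R) (S₂₂ : Matrix n n R) :
    (fromBlocks P (fromCols Q₁ Q₂) (fromRows R₁ R₂) (fromBlocks S₁₁ S₁₂ S₂₁ S₂₂)).submatrix
        (Equiv.sumAssoc l m n) (Equiv.sumAssoc l m n) =
      fromBlocks (fromBlocks P Q₁ R₁ S₁₁) (fromRows Q₂ S₁₂) (fromCols R₂ S₂₁) S₂₂ := by
  ext ((i | i) | i) ((j | j) | j) <;> rfl

end Matrix

lemma matRel_self_add {ι : Type} (M N : Matrix ι ι (ZMod 2)) (hN : Nᵀ = -N)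
    (hN_diag : ∀ i, N i i = 0) : MatRel M (M + N) :=
  ⟨by rw [transpose_add, hN]; abel, fun i => by simp [hN_diag]⟩

section Assoc

variable {μ ν ρ σ κ κ' κ'' : Type} [Fintype ν] [Fintype ρ]
  (Γ : OGTuple μ ν κ) (Γ' : OGTuple ν ρ κ') (Γ'' : OGTuple ρ σ κ'')

lemma ogComp_assoc_A : (ogComp (ogComp Γ Γ') Γ'').A = (ogComp Γ (ogComp Γ' Γ'')).A := by
  simp only [ogComp, transpose_mul, Matrix.mul_add, Matrix.add_mul, Matrix.mul_assoc, add_assoc]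

lemma ogComp_assoc_B : (ogComp (ogComp Γ Γ') Γ'').B = (ogComp Γ (ogComp Γ' Γ'')).B :=
  Matrix.mul_assoc _ _ _

lemma ogComp_assoc_C : (ogComp (ogComp Γ Γ') Γ'').C =
    (ogComp Γ (ogComp Γ' Γ'')).C.submatrix id (Equiv.sumAssoc κ κ' κ'') := by
  simp only [ogComp, mul_fromCols, fromCols_fromCols_submatrix_sumAssoc, transpose_fromRows,
    transpose_mul, transpose_add, transpose_transpose, fromCols_add_fromCols, Matrix.mul_add,
    Matrix.add_mul, Matrix.mul_assoc]
  abel_nf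

lemma ogComp_assoc_D : (ogComp (ogComp Γ Γ') Γ'').D =
    (ogComp Γ (ogComp Γ' Γ'')).D.submatrix (Equiv.sumAssoc κ κ' κ'') id := by
  simp only [ogComp, fromRows_mul, fromRows_fromRows_submatrix_sumAssoc, Matrix.mul_assoc]

lemma ogComp_assoc_E :
    (ogComp Γ (ogComp Γ' Γ'')).E.submatrix (Equiv.sumAssoc κ κ' κ'') (Equiv.sumAssoc κ κ' κ'') =
      (ogComp (ogComp Γ Γ') Γ'').E +
        fromBlocks (fromBlocks 0 (Γ.D * Γ'.B * Γ''.Aᵀ * Γ'.Dᵀ)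
          (-(Γ.D * Γ'.B * Γ''.Aᵀ * Γ'.Dᵀ)ᵀ) 0) 0 0 0 := by
  simp only [ogComp, mul_fromCols]
  rw [← fromRows_zero (m₁ := κ') (m₂ := κ''), fromBlocks_fromBlocks_submatrix_sumAssoc,
    fromCols_zero]
  simp only [fromBlocks_add, fromRows_mul, mul_fromCols, transpose_fromRows,
    fromCols_fromRows_eq_fromBlocks]
  rw [fromBlocks_inj, fromBlocks_inj]
  refine ⟨⟨?_, ?_, ?_, ?_⟩, ?_, ?_, ?_⟩ <;>
    simp only [transpose_mul, transpose_transpose, Matrix.mul_add, Matrix.add_mul,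
      Matrix.mul_assoc, add_zero] <;>
    abel

lemma matRel_ogComp_assoc_E : MatRel (ogComp (ogComp Γ Γ') Γ'').E
    ((ogComp Γ (ogComp Γ' Γ'')).E.submatrix (Equiv.sumAssoc κ κ' κ'')
      (Equiv.sumAssoc κ κ' κ'')) := by
  rw [ogComp_assoc_E]
  refine matRel_self_add _ _ ?_ ?_
  · simp [fromBlocks_transpose, fromBlocks_neg]
  · rintro ((i | i) | i) <;> simp

end Assoc

/-- composition of open-graph tuples is associative: all the components of
`Γ'' ∘ (Γ' ∘ Γ)` and `(Γ'' ∘ Γ') ∘ Γ` agree (up to the canonical reassociation of the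
internal vertex sets), the E-components agreeing up to the `[·]`-equivalence `MatRel`.
In particular the first component is `A + B(A' + B' A'' B'ᵀ)Bᵀ`. -/
theorem ogComp_assoc {m n p q k k' k'' : ℕ}
    (Γ : OGTuple (Fin m) (Fin n) (Fin k))
    (Γ' : OGTuple (Fin n) (Fin p) (Fin k'))
    (Γ'' : OGTuple (Fin p) (Fin q) (Fin k'')) :
    letI lhs := ogComp (ogComp Γ Γ') Γ''       -- Γ'' ∘ (Γ' ∘ Γ)
    letI rhs := ogComp Γ (ogComp Γ' Γ'')       -- (Γ'' ∘ Γ') ∘ Γ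
    letI e := Equiv.sumAssoc (Fin k) (Fin k') (Fin k'')
    lhs.A = Γ.A + Γ.B * (Γ'.A + Γ'.B * Γ''.A * Γ'.Bᵀ) * Γ.Bᵀ ∧
    lhs.A = rhs.A ∧
    lhs.B = Γ.B * Γ'.B * Γ''.B ∧
    lhs.B = rhs.B ∧
    lhs.C = rhs.C.submatrix id e ∧
    lhs.D = rhs.D.submatrix e id ∧
    MatRel lhs.E (rhs.E.submatrix e e) :=
  ⟨ogComp_assoc_A Γ Γ' Γ'', ogComp_assoc_A Γ Γ' Γ'', rfl, ogComp_assoc_B Γ Γ' Γ'',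
    ogComp_assoc_C Γ Γ' Γ'', ogComp_assoc_D Γ Γ' Γ'', matRel_ogComp_assoc_E Γ Γ' Γ''⟩
end

section
/- The monoidal product of open-graph tuples is a bifunctor up to the permutation equivalence: for composable tuples Γ : m→n, Γ₀ : n→p and Γ' : m'→n', Γ'₀ : n'→p', the tuple (Γ₀ ∘ Γ) ⊗ (Γ'₀ ∘ Γ') is obtained from (Γ₀ ⊗ Γ'₀) ∘ (Γ ⊗ Γ') by acting with the permutation matrix that reorders the internal vertex blocks (k, k₀, k', k'₀) to (k, k', k₀, k'₀), namely the block matrix P = [[1,0,0,0],[0,0,1,0],[0,1,0,0],[0,0,0,1]] acting as (C,D,E) ↦ (CPᵀ, PD, PEPᵀ). -/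
open Matrix

/-- Monoidal (block-diagonal) product of open-graph tuples. -/
def ogTensor {μ ν κ μ' ν' κ' : Type} (Γ : OGTuple μ ν κ) (Γ' : OGTuple μ' ν' κ') :
    OGTuple (μ ⊕ μ') (ν ⊕ ν') (κ ⊕ κ') where
  A := Matrix.fromBlocks Γ.A 0 0 Γ'.A
  B := Matrix.fromBlocks Γ.B 0 0 Γ'.B
  C := Matrix.fromBlocks Γ.C 0 0 Γ'.C
  D := Matrix.fromBlocks Γ.D 0 0 Γ'.D
  E := Matrix.fromBlocks Γ.E 0 0 Γ'.E

/-!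
Composition and tensor product are both given by block formulas, and block-diagonal sums
commute with matrix sums, products and transposes. Hence each component of
`(Γ₀ ⊗ Γ'₀) ∘ (Γ ⊗ Γ')` has the same blocks as the corresponding component of
`(Γ₀ ∘ Γ) ⊗ (Γ'₀ ∘ Γ')`; only the internal vertices are grouped as `(k ⊕ k') ⊕ (k₀ ⊕ k'₀)` instead
of `(k ⊕ k₀) ⊕ (k' ⊕ k'₀)`, and passing between the two groupings of a 2 × 2 block matrix of
2 × 2 block matrices is the reindexing by `Equiv.sumSumSumComm`.
-/

namespace Matrix

variable {R μ μ' κ κ₀ κ' κ'₀ ι ι₀ ι' ι'₀ : Type*}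

theorem fromBlocks_fromCols (a₁ : Matrix μ κ R) (b₁ : Matrix μ κ₀ R) (a₂ : Matrix μ κ' R)
    (b₂ : Matrix μ κ'₀ R) (a₃ : Matrix μ' κ R) (b₃ : Matrix μ' κ₀ R) (a₄ : Matrix μ' κ' R)
    (b₄ : Matrix μ' κ'₀ R) :
    fromBlocks (fromCols a₁ b₁) (fromCols a₂ b₂) (fromCols a₃ b₃) (fromCols a₄ b₄) =
      (fromCols (fromBlocks a₁ a₂ a₃ a₄) (fromBlocks b₁ b₂ b₃ b₄)).submatrix id
        (Equiv.sumSumSumComm κ κ₀ κ' κ'₀) := by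
  ext (i | i) ((j | j) | (j | j)) <;> rfl

theorem fromBlocks_fromRows (a₁ : Matrix κ μ R) (b₁ : Matrix κ₀ μ R) (a₂ : Matrix κ μ' R)
    (b₂ : Matrix κ₀ μ' R) (a₃ : Matrix κ' μ R) (b₃ : Matrix κ'₀ μ R) (a₄ : Matrix κ' μ' R)
    (b₄ : Matrix κ'₀ μ' R) :
    fromBlocks (fromRows a₁ b₁) (fromRows a₂ b₂) (fromRows a₃ b₃) (fromRows a₄ b₄) =
      (fromRows (fromBlocks a₁ a₂ a₃ a₄) (fromBlocks b₁ b₂ b₃ b₄)).submatrix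
        (Equiv.sumSumSumComm κ κ₀ κ' κ'₀) id := by
  ext ((i | i) | (i | i)) (j | j) <;> rfl

theorem fromBlocks_fromBlocks
    (a₁ : Matrix κ ι R) (b₁ : Matrix κ ι₀ R) (c₁ : Matrix κ₀ ι R) (d₁ : Matrix κ₀ ι₀ R)
    (a₂ : Matrix κ ι' R) (b₂ : Matrix κ ι'₀ R) (c₂ : Matrix κ₀ ι' R) (d₂ : Matrix κ₀ ι'₀ R)
    (a₃ : Matrix κ' ι R) (b₃ : Matrix κ' ι₀ R) (c₃ : Matrix κ'₀ ι R) (d₃ : Matrix κ'₀ ι₀ R)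
    (a₄ : Matrix κ' ι' R) (b₄ : Matrix κ' ι'₀ R) (c₄ : Matrix κ'₀ ι' R)
    (d₄ : Matrix κ'₀ ι'₀ R) :
    fromBlocks (fromBlocks a₁ b₁ c₁ d₁) (fromBlocks a₂ b₂ c₂ d₂) (fromBlocks a₃ b₃ c₃ d₃)
        (fromBlocks a₄ b₄ c₄ d₄) =
      (fromBlocks (fromBlocks a₁ a₂ a₃ a₄) (fromBlocks b₁ b₂ b₃ b₄) (fromBlocks c₁ c₂ c₃ c₄)
        (fromBlocks d₁ d₂ d₃ d₄)).submatrix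
        (Equiv.sumSumSumComm κ κ₀ κ' κ'₀) (Equiv.sumSumSumComm ι ι₀ ι' ι'₀) := by
  ext ((i | i) | (i | i)) ((j | j) | (j | j)) <;> rfl

end Matrix

section

variable {μ ν ρ κ κ₀ μ' ν' ρ' κ' κ'₀ : Type} [Fintype ν] [Fintype ν']
  (Γ : OGTuple μ ν κ) (Γ₀ : OGTuple ν ρ κ₀) (Γ' : OGTuple μ' ν' κ') (Γ'₀ : OGTuple ν' ρ' κ'₀)

theorem ogTensor_ogComp_A :
    (ogTensor (ogComp Γ Γ₀) (ogComp Γ' Γ'₀)).A = (ogComp (ogTensor Γ Γ') (ogTensor Γ₀ Γ'₀)).A := by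
  simp [ogComp, ogTensor, fromBlocks_multiply, fromBlocks_transpose, fromBlocks_add]

theorem ogTensor_ogComp_B :
    (ogTensor (ogComp Γ Γ₀) (ogComp Γ' Γ'₀)).B = (ogComp (ogTensor Γ Γ') (ogTensor Γ₀ Γ'₀)).B := by
  simp [ogComp, ogTensor, fromBlocks_multiply]

theorem ogTensor_ogComp_C :
    (ogTensor (ogComp Γ Γ₀) (ogComp Γ' Γ'₀)).C =
      (ogComp (ogTensor Γ Γ') (ogTensor Γ₀ Γ'₀)).C.submatrix id
        (Equiv.sumSumSumComm κ κ₀ κ' κ'₀) := by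
  simp only [ogComp, ogTensor]
  rw [← fromCols_zero, ← fromCols_zero, fromBlocks_fromCols]
  simp [fromBlocks_multiply, fromBlocks_transpose, fromBlocks_add]

theorem ogTensor_ogComp_D :
    (ogTensor (ogComp Γ Γ₀) (ogComp Γ' Γ'₀)).D =
      (ogComp (ogTensor Γ Γ') (ogTensor Γ₀ Γ'₀)).D.submatrix
        (Equiv.sumSumSumComm κ κ₀ κ' κ'₀) id := by
  simp only [ogComp, ogTensor]
  rw [← fromRows_zero, ← fromRows_zero, fromBlocks_fromRows]
  simp [fromBlocks_multiply]

theorem ogTensor_ogComp_E :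
    (ogTensor (ogComp Γ Γ₀) (ogComp Γ' Γ'₀)).E =
      (ogComp (ogTensor Γ Γ') (ogTensor Γ₀ Γ'₀)).E.submatrix
        (Equiv.sumSumSumComm κ κ₀ κ' κ'₀) (Equiv.sumSumSumComm κ κ₀ κ' κ'₀) := by
  simp only [ogComp, ogTensor]
  rw [← fromBlocks_zero, ← fromBlocks_zero, ← fromBlocks_zero, fromBlocks_fromBlocks]
  simp [fromBlocks_multiply, fromBlocks_transpose, fromBlocks_add]

end

/-- the monoidal product is a bifunctor up to the permutation equivalence:
`(Γ₀ ∘ Γ) ⊗ (Γ'₀ ∘ Γ')` is obtained from `(Γ₀ ⊗ Γ'₀) ∘ (Γ ⊗ Γ')` by the permutation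
reordering the internal vertex blocks `(k, k₀, k', k'₀)` to `(k, k', k₀, k'₀)`
(acting on the internal-vertex indices of the C-, D- and E-components). -/
theorem ogTensor_bifunctor {m n p m' n' p' k k₀ k' k'₀ : ℕ}
    (Γ : OGTuple (Fin m) (Fin n) (Fin k)) (Γ₀ : OGTuple (Fin n) (Fin p) (Fin k₀))
    (Γ' : OGTuple (Fin m') (Fin n') (Fin k')) (Γ'₀ : OGTuple (Fin n') (Fin p') (Fin k'₀)) :
    letI lhs := ogTensor (ogComp Γ Γ₀) (ogComp Γ' Γ'₀)   -- (Γ₀ ∘ Γ) ⊗ (Γ'₀ ∘ Γ')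
    letI rhs := ogComp (ogTensor Γ Γ') (ogTensor Γ₀ Γ'₀) -- (Γ₀ ⊗ Γ'₀) ∘ (Γ ⊗ Γ')
    letI e := Equiv.sumSumSumComm (Fin k) (Fin k₀) (Fin k') (Fin k'₀)
    lhs.A = rhs.A ∧ lhs.B = rhs.B ∧
    lhs.C = rhs.C.submatrix id e ∧
    lhs.D = rhs.D.submatrix e id ∧
    lhs.E = rhs.E.submatrix e e :=
  ⟨ogTensor_ogComp_A Γ Γ₀ Γ' Γ'₀, ogTensor_ogComp_B Γ Γ₀ Γ' Γ'₀, ogTensor_ogComp_C Γ Γ₀ Γ' Γ'₀,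
    ogTensor_ogComp_D Γ Γ₀ Γ' Γ'₀, ogTensor_ogComp_E Γ Γ₀ Γ' Γ'₀⟩
end

section
/- The symmetry of the open-graph prop is natural up to the permutation equivalence: for tuples Γ : m→n and Γ' : m'→n', σ_{n,n'} ∘ (Γ ⊗ Γ') is obtained from (Γ' ⊗ Γ) ∘ σ_{m,m'} by acting with the block permutation matrix [[0, 1_{k'}],[1_k, 0]] on the (C, D, E) components. Concretely: composing Γ ⊗ Γ' (whose B-component is diag(B,B')) with the k=0 tuple having B-matrix the swap [[0,1ₙ],[1_{n'},0]] yields B-component diag(B,B')·swap = swap·diag(B',B), matching the B-component of (Γ' ⊗ Γ) ∘ σ_{m,m'}, while the (C, D, E) components differ exactly by the stated block swap permutation. -/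
open Matrix

/-- The symmetry `σ_{α,β}`: no internal vertices, B-matrix the block swap
`[[0, 1_α],[1_β, 0]]`. -/
def ogSwap (α β : Type) [DecidableEq α] [DecidableEq β] :
    OGTuple (α ⊕ β) (β ⊕ α) Empty where
  A := 0
  B := Matrix.fromBlocks 0 1 1 0
  C := 0
  D := 0
  E := 0

/-! The B-matrix of `σ` is the permutation matrix of `Sum.swap`, so composing with `σ` on either
side only reindexes rows or columns by `Sum.swap`, and `σ` has no internal vertices, so every block
it contributes is indexed by `Empty`. Reindexing a block-diagonal matrix by `Sum.swap` on both sides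
exchanges its diagonal blocks, which turns `Γ' ⊗ Γ` into `Γ ⊗ Γ'`. -/

section BlockSwap

variable {α β γ R : Type*} [DecidableEq α] [DecidableEq β]

theorem fromBlocks_zero_one_one_zero_eq_submatrix_one [Zero R] [One R] :
    (fromBlocks 0 1 1 0 : Matrix (α ⊕ β) (β ⊕ α) R) =
      (1 : Matrix (β ⊕ α) (β ⊕ α) R).submatrix Sum.swap id := by
  ext (i | i) (j | j) <;> simp [one_apply]

variable [Fintype α] [Fintype β] [NonAssocSemiring R]

theorem fromBlocks_zero_one_one_zero_mul (M : Matrix (β ⊕ α) γ R) :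
    (fromBlocks 0 1 1 0 : Matrix (α ⊕ β) (β ⊕ α) R) * M = M.submatrix Sum.swap id := by
  rw [fromBlocks_zero_one_one_zero_eq_submatrix_one]
  exact one_submatrix_mul _ (Equiv.refl _) M

theorem mul_fromBlocks_zero_one_one_zero (M : Matrix γ (α ⊕ β) R) :
    M * (fromBlocks 0 1 1 0 : Matrix (α ⊕ β) (β ⊕ α) R) = M.submatrix id Sum.swap := by
  rw [fromBlocks_zero_one_one_zero_eq_submatrix_one]
  exact mul_submatrix_one (Equiv.sumComm α β) id M

end BlockSwap

section EmptyBlocks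

variable {μ κ κ' ρ R : Type*} [Zero R] {e : κ ⊕ Empty → Empty ⊕ κ'} {f : κ → κ'}

theorem fromCols_empty_submatrix (he : ∀ x, e (.inl x) = .inr (f x)) (N : Matrix μ Empty R)
    (M : Matrix μ κ' R) : (fromCols N M).submatrix id e = fromCols (M.submatrix id f) 0 := by
  ext i (j | j)
  · simp [he]
  · exact j.elim

theorem fromRows_empty_submatrix (he : ∀ x, e (.inl x) = .inr (f x)) (N : Matrix Empty ρ R)
    (M : Matrix κ' ρ R) : (fromRows N M).submatrix e id = fromRows (M.submatrix f id) 0 := by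
  ext (i | i) j
  · simp [he]
  · exact i.elim

theorem fromBlocks_empty_submatrix (he : ∀ x, e (.inl x) = .inr (f x)) (N₁ : Matrix Empty Empty R)
    (N₂ : Matrix Empty κ' R) (N₃ : Matrix κ' Empty R) (M : Matrix κ' κ' R) :
    (fromBlocks N₁ N₂ N₃ M).submatrix e e = fromBlocks (M.submatrix f f) 0 0 0 := by
  ext (i | i) (j | j)
  · simp [he]
  all_goals first | exact i.elim | exact j.elim

end EmptyBlocks

section Swap

variable {μ ν ν' ρ κ : Type} [DecidableEq ν] [DecidableEq ν'] [Fintype ν] [Fintype ν']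

theorem ogComp_ogSwap_right (Γ : OGTuple μ (ν ⊕ ν') κ) :
    ogComp Γ (ogSwap ν ν') =
      ⟨Γ.A, Γ.B.submatrix id Sum.swap, fromCols Γ.C 0, fromRows (Γ.D.submatrix id Sum.swap) 0,
        fromBlocks Γ.E 0 0 0⟩ := by
  simp [ogComp, ogSwap, mul_fromBlocks_zero_one_one_zero]

theorem ogComp_ogSwap_left (Γ : OGTuple (ν' ⊕ ν) ρ κ) :
    ogComp (ogSwap ν ν') Γ =
      ⟨Γ.A.submatrix Sum.swap Sum.swap, Γ.B.submatrix Sum.swap id,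
        fromCols 0 (Γ.C.submatrix Sum.swap id), fromRows 0 Γ.D, fromBlocks 0 0 0 Γ.E⟩ := by
  simp [ogComp, ogSwap, fromBlocks_transpose, mul_fromBlocks_zero_one_one_zero,
    fromBlocks_zero_one_one_zero_mul]

end Swap

/-- the symmetry of the open-graph prop is natural up to the permutation
equivalence: `σ_{n,n'} ∘ (Γ ⊗ Γ')` is obtained from `(Γ' ⊗ Γ) ∘ σ_{m,m'}` by the block swap
permutation on the internal vertices; the A- and B-components agree on the nose (in
particular `diag(B,B')·swap = swap·diag(B',B)`), while the C-, D- and E-components agree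
up to the swap `[[0,1_{k'}],[1_k,0]]` of the internal vertex blocks. -/
theorem ogSwap_natural {m n m' n' k k' : ℕ}
    (Γ : OGTuple (Fin m) (Fin n) (Fin k)) (Γ' : OGTuple (Fin m') (Fin n') (Fin k')) :
    letI lhs := ogComp (ogTensor Γ Γ') (ogSwap (Fin n) (Fin n'))  -- σ_{n,n'} ∘ (Γ ⊗ Γ')
    letI rhs := ogComp (ogSwap (Fin m) (Fin m')) (ogTensor Γ' Γ)  -- (Γ' ⊗ Γ) ∘ σ_{m,m'}
    letI e : (Fin k ⊕ Fin k') ⊕ Empty ≃ Empty ⊕ (Fin k' ⊕ Fin k) :=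
      (Equiv.sumEmpty _ _).trans ((Equiv.sumComm _ _).trans (Equiv.emptySum _ _).symm)
    lhs.A = rhs.A ∧ lhs.B = rhs.B ∧
    lhs.C = rhs.C.submatrix id e ∧
    lhs.D = rhs.D.submatrix e id ∧
    lhs.E = rhs.E.submatrix e e := by
  simp only [ogComp_ogSwap_right, ogComp_ogSwap_left, ogTensor]
  rw [fromCols_empty_submatrix (f := Sum.swap) fun _ => rfl,
    fromRows_empty_submatrix (f := Sum.swap) fun _ => rfl,
    fromBlocks_empty_submatrix (f := Sum.swap) fun _ => rfl]
  simp only [fromBlocks_submatrix_sum_swap_left, fromBlocks_submatrix_sum_swap_right,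
    submatrix_id_id, and_self]
end

section
/- In bij, define the monoidal product (k,P) ⊗ (k',P') = (k+k', S · diag(P,P')), where S is the permutation matrix [[1ₘ,0,0,0],[0,0,1_{m'},0],[0,1ₖ,0,0],[0,0,0,1_{k'}]] interleaving the blocks (m, k, m', k') into (m, m', k, k'). Then ⊗ is well-defined on equivalence classes: if P' is replaced by diag(1ₘ,σ)·P and Q' by diag(1ₙ,ρ)·Q, the resulting tensor differs from (k,P)⊗(l,Q) by the permutation matrix diag(1_{m+n}, σ, ρ), using the identity S · diag(diag(1ₘ,σ), diag(1ₙ,ρ)) = diag(1ₘ,1ₙ,σ,ρ) · S. -/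
open Matrix

/-- The interleaving permutation matrix `S` reordering the blocks `(m, k, m', k')` into
`(m, m', k, k')`: `S = [[1ₘ,0,0,0],[0,0,1_{m'},0],[0,1ₖ,0,0],[0,0,0,1_{k'}]]`. -/
def interleave (m k m' k' : ℕ) :
    Matrix ((Fin m ⊕ Fin m') ⊕ (Fin k ⊕ Fin k'))
      ((Fin m ⊕ Fin k) ⊕ (Fin m' ⊕ Fin k')) (ZMod 2) :=
  Matrix.fromBlocks (Matrix.fromBlocks 1 0 0 0) (Matrix.fromBlocks 0 0 1 0)
    (Matrix.fromBlocks 0 1 0 0) (Matrix.fromBlocks 0 0 0 1)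

theorem interleave_mul_fromBlocks_diag {m k n l : ℕ} (A : Matrix (Fin m) (Fin m) (ZMod 2))
    (B : Matrix (Fin k) (Fin k) (ZMod 2)) (C : Matrix (Fin n) (Fin n) (ZMod 2))
    (D : Matrix (Fin l) (Fin l) (ZMod 2)) :
    interleave m k n l * fromBlocks (fromBlocks A 0 0 B) 0 0 (fromBlocks C 0 0 D) =
      fromBlocks (fromBlocks A 0 0 C) 0 0 (fromBlocks B 0 0 D) * interleave m k n l := by
  simp [interleave, fromBlocks_multiply]

theorem fromBlocks_diag_mul_fromBlocks_diag {α β R : Type*} [Fintype α] [Fintype β]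
    [NonUnitalNonAssocSemiring R] (A A' : Matrix α α R) (B B' : Matrix β β R) :
    fromBlocks A 0 0 B * fromBlocks A' 0 0 B' = fromBlocks (A * A') 0 0 (B * B') := by
  simp [fromBlocks_multiply]

/-- the monoidal product of `bij`, `(k,P) ⊗ (k',Q) = (k+k', S·diag(P,Q))`, is
well-defined on equivalence classes: replacing `P` by `diag(1ₘ,σ)·P` and `Q` by
`diag(1ₙ,ρ)·Q` changes the tensor by the permutation matrix `diag(1ₘ,1ₙ,σ,ρ)`, thanks to
the commutation identity `S · diag(diag(1ₘ,σ), diag(1ₙ,ρ)) = diag(diag(1ₘ,1ₙ), diag(σ,ρ)) · S`. -/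
theorem bij_tensor_well_defined (m k n l : ℕ)
    (πP : Equiv.Perm (Fin m ⊕ Fin k)) (πQ : Equiv.Perm (Fin n ⊕ Fin l))
    (πσ : Equiv.Perm (Fin k)) (πρ : Equiv.Perm (Fin l)) :
    letI P := πP.permMatrix (ZMod 2)
    letI Q := πQ.permMatrix (ZMod 2)
    letI σ := πσ.permMatrix (ZMod 2)
    letI ρ := πρ.permMatrix (ZMod 2)
    letI S := interleave m k n l
    -- the commutation identity for S
    (S * Matrix.fromBlocks (Matrix.fromBlocks 1 0 0 σ) 0 0 (Matrix.fromBlocks 1 0 0 ρ) =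
      Matrix.fromBlocks 1 0 0 (Matrix.fromBlocks σ 0 0 ρ) * S) ∧
    -- well-definedness of the tensor on equivalence classes
    (S * Matrix.fromBlocks (Matrix.fromBlocks 1 0 0 σ * P) 0 0
          (Matrix.fromBlocks 1 0 0 ρ * Q) =
      Matrix.fromBlocks 1 0 0 (Matrix.fromBlocks σ 0 0 ρ) *
        (S * Matrix.fromBlocks P 0 0 Q)) := by
  have commute := interleave_mul_fromBlocks_diag (1 : Matrix (Fin m) (Fin m) (ZMod 2))
    (πσ.permMatrix (ZMod 2)) (1 : Matrix (Fin n) (Fin n) (ZMod 2)) (πρ.permMatrix (ZMod 2))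
  rw [fromBlocks_one] at commute
  refine ⟨commute, ?_⟩
  rw [← fromBlocks_diag_mul_fromBlocks_diag, ← Matrix.mul_assoc, commute]
  exact Matrix.mul_assoc _ _ _
end

section
/- The map i₁ : UMat → 𝔸 sending an adjacency-matrix morphism (B, [A]) : m → n (B an m×n matrix, A an m×m matrix up to the symmetric-difference relation) to the open-graph tuple (0, [A], B, !, ¡, [()]) preserves composition: under the UMat composition (B',[A']) ∘ (B,[A]) = (B B', [A + B A' Bᵀ]), one has i₁((B',[A']) ∘ (B,[A])) = i₁(B',[A']) ∘ i₁(B,[A]) where the right-hand side uses the open-graph composition formula (all internal-vertex blocks being empty). -/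
open Matrix

/-- The map `i₁ : UMat → 𝔸`, sending an adjacency-matrix morphism `(B, A)` (with `B : m×n`
and `A : m×m`) to the open-graph tuple `(0, A, B, !, ¡, ())` with no internal vertices. -/
def i1 {m n : ℕ} (B : Matrix (Fin m) (Fin n) (ZMod 2)) (A : Matrix (Fin m) (Fin m) (ZMod 2)) :
    OGTuple (Fin m) (Fin n) (Fin 0) where
  A := A
  B := B
  C := 0
  D := 0
  E := 0

/-- `i₁` preserves composition: `i₁((B',A') ∘ (B,A)) = i₁(B',A') ∘ i₁(B,A)`,
where the UMat composition is `(B',A') ∘ (B,A) = (B·B', A + B·A'·Bᵀ)` and the right-hand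
side uses the open-graph composition formula (all internal-vertex blocks being empty). -/
theorem i1_preserves_composition {m n p : ℕ}
    (B : Matrix (Fin m) (Fin n) (ZMod 2)) (A : Matrix (Fin m) (Fin m) (ZMod 2))
    (B' : Matrix (Fin n) (Fin p) (ZMod 2)) (A' : Matrix (Fin n) (Fin n) (ZMod 2)) :
    letI l := ogComp (i1 B A) (i1 B' A')
    letI e := Equiv.sumEmpty (Fin 0) (Fin 0)  -- Fin 0 ⊕ Fin 0 ≃ Fin 0
    l.A = A + B * A' * Bᵀ ∧ l.B = B * B' ∧
    l.C = ((0 : Matrix (Fin m) (Fin 0) (ZMod 2)).submatrix id e) ∧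
    l.D = ((0 : Matrix (Fin 0) (Fin p) (ZMod 2)).submatrix e id) ∧
    l.E = ((0 : Matrix (Fin 0) (Fin 0) (ZMod 2)).submatrix e e) := by
  exact ⟨rfl, rfl, Subsingleton.elim _ _, Subsingleton.elim _ _, Subsingleton.elim _ _⟩
end

section
/- The class-function [·] on square matrices over F₂ given by the relation A ~ A' iff A + Aᵀ = A' + A'ᵀ and diag(A) = diag(A') is a congruence for the UMat composition: if A ~ A₁ and A' ~ A'₁ then A + B A' Bᵀ ~ A₁ + B A'₁ Bᵀ for every compatible matrix B. Equivalently, the map (A, A') ↦ [A + B A' Bᵀ] depends only on ([A], [A']). -/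
open Matrix

lemma sum_symm_zero {n : ℕ} (f : Fin n → Fin n → ZMod 2)
    (hs : ∀ j k, f j k = f k j) (hd : ∀ j, f j j = 0) :
    ∑ j, ∑ k, f j k = 0 := by
  rw [← Finset.sum_product']
  refine Finset.sum_involution (fun p _ => (p.2, p.1)) ?_ ?_ ?_ ?_
  · intro p _
    show f p.1 p.2 + f p.2 p.1 = 0
    rw [hs p.1 p.2]
    exact CharTwo.add_self_eq_zero _
  · intro p _ hne
    intro h
    apply hne
    have h1 : p.2 = p.1 := congrArg Prod.fst h
    rw [show f p.1 p.2 = f p.1 p.1 by rw [h1], hd]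
  · intro p _; simp
  · intro p _; rfl

/-- the class function `[·]` is a congruence for the UMat composition: if
`A ~ A₁` and `A' ~ A'₁` then `A + B·A'·Bᵀ ~ A₁ + B·A'₁·Bᵀ` for every compatible matrix `B`;
equivalently, `(A, A') ↦ [A + B·A'·Bᵀ]` depends only on `([A], [A'])`. -/
theorem matRel_congruence {m n : ℕ}
    (A A₁ : Matrix (Fin m) (Fin m) (ZMod 2)) (A' A'₁ : Matrix (Fin n) (Fin n) (ZMod 2))
    (B : Matrix (Fin m) (Fin n) (ZMod 2))
    (hA : MatRel A A₁) (hA' : MatRel A' A'₁) :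
    MatRel (A + B * A' * Bᵀ) (A₁ + B * A'₁ * Bᵀ) := by
  obtain ⟨h1, h2⟩ := hA
  obtain ⟨h1', h2'⟩ := hA'
  -- D = A' + A'₁ is symmetric with zero diagonal (char 2)
  have hDsymm : ∀ j k, A' j k + A'₁ j k = A' k j + A'₁ k j := by
    intro j k
    have := congrFun (congrFun h1' j) k
    simp only [Matrix.add_apply, Matrix.transpose_apply] at this
    have h2zero : (2 : ZMod 2) = 0 := rfl
    linear_combination this + (A'₁ j k - A' k j) * h2zero
  have hDdiag : ∀ j, A' j j + A'₁ j j = 0 := by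
    intro j; rw [h2' j]; exact CharTwo.add_self_eq_zero _
  constructor
  · have expand2 : ∀ M N : Matrix (Fin n) (Fin n) (ZMod 2),
        B * (M + N) * Bᵀ = B * M * Bᵀ + B * N * Bᵀ := by
      intro M N; rw [Matrix.mul_add, Matrix.add_mul]
    have key : (B * A' * Bᵀ) + (B * A' * Bᵀ)ᵀ = (B * A'₁ * Bᵀ) + (B * A'₁ * Bᵀ)ᵀ := by
      simp only [Matrix.transpose_mul, Matrix.transpose_transpose, ← Matrix.mul_assoc]
      rw [← expand2, ← expand2, h1']
    calc (A + B * A' * Bᵀ) + (A + B * A' * Bᵀ)ᵀ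
        = (A + Aᵀ) + ((B * A' * Bᵀ) + (B * A' * Bᵀ)ᵀ) := by
          simp only [Matrix.transpose_add]; abel
      _ = (A₁ + A₁ᵀ) + ((B * A'₁ * Bᵀ) + (B * A'₁ * Bᵀ)ᵀ) := by rw [h1, key]
      _ = (A₁ + B * A'₁ * Bᵀ) + (A₁ + B * A'₁ * Bᵀ)ᵀ := by
          simp only [Matrix.transpose_add]; abel
  · intro i
    have key : (B * A' * Bᵀ) i i = (B * A'₁ * Bᵀ) i i := by
      have hsum : ∑ j, ∑ k, B i j * (A' j k + A'₁ j k) * B i k = 0 := by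
        apply sum_symm_zero
        · intro j k; rw [hDsymm j k]; ring
        · intro j; rw [hDdiag j]; ring
      have expand : ∀ (M : Matrix (Fin n) (Fin n) (ZMod 2)),
          (B * M * Bᵀ) i i = ∑ j, ∑ k, B i j * M j k * B i k := by
        intro M
        simp only [Matrix.mul_apply, Finset.sum_mul, Matrix.transpose_apply]
        exact Finset.sum_comm
      rw [expand, expand]
      have : ∑ j, ∑ k, B i j * (A' j k + A'₁ j k) * B i k
          = (∑ j, ∑ k, B i j * A' j k * B i k) + ∑ j, ∑ k, B i j * A'₁ j k * B i k := by
        rw [← Finset.sum_add_distrib]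
        congr 1; ext j
        rw [← Finset.sum_add_distrib]
        congr 1; ext k; ring
      rw [this, CharTwo.add_eq_iff_eq_add, zero_add] at hsum
      exact hsum
    simp only [Matrix.add_apply, h2 i, key]
end

section
/- In any prop (symmetric strict monoidal category), the symmetries assemble permutation matrices functorially: block-diagonal composition of permutations corresponds to tensor, and the interleaving identity S · (P ⊕ P') used in bij's tensor satisfies S_{m,k,m',k'} ∘ (σ-image of P ⊕ P') equals the image of the matrix product, i.e. the assignment P ↦ (composite of symmetries realizing P) is a prop homomorphism from the prop of permutation matrices Matₚₑᵣₘ to ℙ. In particular any two ways of writing a permutation matrix as a product of adjacent transposition matrices give equal morphisms in ℙ. -/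
/-- A prop: a symmetric strict monoidal category whose objects are the natural numbers,
with tensor on objects given by addition. -/
structure PROP where
  Hom : ℕ → ℕ → Type
  id : (n : ℕ) → Hom n n
  /-- composition, in diagrammatic order -/
  comp : {m n p : ℕ} → Hom m n → Hom n p → Hom m p
  tensor : {m n m' n' : ℕ} → Hom m n → Hom m' n' → Hom (m + m') (n + n')
  /-- the symmetry `σ_{m,n} : m + n → n + m` -/
  braid : (m n : ℕ) → Hom (m + n) (n + m)
  id_comp : ∀ {m n} (f : Hom m n), comp (id m) f = f
  comp_id : ∀ {m n} (f : Hom m n), comp f (id n) = f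
  assoc : ∀ {m n p q} (f : Hom m n) (g : Hom n p) (h : Hom p q),
    comp (comp f g) h = comp f (comp g h)
  tensor_id : ∀ m n, tensor (id m) (id n) = id (m + n)
  tensor_comp : ∀ {m n p m' n' p'} (f : Hom m n) (g : Hom n p) (f' : Hom m' n') (g' : Hom n' p'),
    tensor (comp f g) (comp f' g') = comp (tensor f f') (tensor g g')
  tensor_assoc : ∀ {m n m' n' m'' n''} (f : Hom m n) (f' : Hom m' n') (f'' : Hom m'' n''),
    HEq (tensor (tensor f f') f'') (tensor f (tensor f' f''))
  tensor_unit_left : ∀ {m n} (f : Hom m n), HEq (tensor (id 0) f) f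
  tensor_unit_right : ∀ {m n} (f : Hom m n), tensor f (id 0) = f
  braid_braid : ∀ m n, comp (braid m n) (braid n m) = id (m + n)
  braid_natural : ∀ {m n m' n'} (f : Hom m n) (f' : Hom m' n'),
    comp (tensor f f') (braid n n') = comp (braid m m') (tensor f' f)
  braid_hexagon : ∀ m n p,
    braid m (n + p) =
      comp (cast (by rw [Nat.add_assoc]) (tensor (braid m n) (id p)) :
          Hom (m + (n + p)) ((n + m) + p))
        (cast (by rw [Nat.add_assoc n m p, Nat.add_assoc n p m])
          (tensor (id n) (braid m p)) : Hom ((n + m) + p) ((n + p) + m))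

/-- Homomorphisms of props: identity-on-objects strict symmetric monoidal functors. -/
structure PROPHom (P Q : PROP) where
  map : ∀ {m n}, P.Hom m n → Q.Hom m n
  map_id : ∀ n, map (P.id n) = Q.id n
  map_comp : ∀ {m n p} (f : P.Hom m n) (g : P.Hom n p),
    map (P.comp f g) = Q.comp (map f) (map g)
  map_tensor : ∀ {m n m' n'} (f : P.Hom m n) (f' : P.Hom m' n'),
    map (P.tensor f f') = Q.tensor (map f) (map f')
  map_braid : ∀ m n, map (P.braid m n) = Q.braid m n

/-- The adjacent transposition `(i, i+1)` as a permutation of `Fin (i + 2 + j)`. -/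
def adjSwap (i j : ℕ) : Equiv.Perm (Fin (i + 2 + j)) :=
  Equiv.swap ⟨i, by omega⟩ ⟨i + 1, by omega⟩

namespace PROP

variable {P : PROP}

/-- recast a morphism along equalities of objects -/
def rc {m m' n n' : ℕ} (hm : m = m') (hn : n = n') (f : P.Hom m n) : P.Hom m' n' := by
  subst hm; subst hn; exact f

@[simp] theorem rc_rfl {m n : ℕ} (f : P.Hom m n) : rc rfl rfl f = f := rfl

theorem rc_rc {m m' m'' n n' n'' : ℕ} (h1 : m = m') (h2 : n = n') (h3 : m' = m'')
    (h4 : n' = n'') (f : P.Hom m n) :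
    rc h3 h4 (rc h1 h2 f) = rc (h1.trans h3) (h2.trans h4) f := by
  subst h1; subst h2; subst h3; subst h4; rfl

theorem rc_eq_of_heq {m m' n n' : ℕ} (hm : m = m') (hn : n = n') {f : P.Hom m n}
    {g : P.Hom m' n'} (H : HEq f g) : rc hm hn f = g := by
  subst hm; subst hn; exact eq_of_heq H

theorem heq_rc {m m' n n' : ℕ} (hm : m = m') (hn : n = n') (f : P.Hom m n) :
    HEq (rc hm hn f) f := by subst hm; subst hn; rfl

theorem rc_id {m n : ℕ} (h h' : m = n) : rc h h' (P.id m) = P.id n := by subst h; rfl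

theorem rc_inv {m m' n n' : ℕ} (hm : m = m') (hn : n = n') {f : P.Hom m n}
    {g : P.Hom m' n'} (H : rc hm hn f = g) : f = rc hm.symm hn.symm g := by
  subst hm; subst hn; exact H

theorem rc_comp {m m' n n' p p' : ℕ} (hm : m = m') (hn hn' : n = n') (hp : p = p')
    (f : P.Hom m n) (g : P.Hom n p) :
    P.comp (rc hm hn f) (rc hn' hp g) = rc hm hp (P.comp f g) := by
  subst hm; subst hn; subst hp; rfl

theorem rc_tensor {m m' n n' k k' l l' : ℕ} (hm : m = m') (hn : n = n') (hk : k = k')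
    (hl : l = l') (f : P.Hom m n) (g : P.Hom k l) :
    P.tensor (rc hm hn f) (rc hk hl g)
      = rc (by rw [hm, hk]) (by rw [hn, hl]) (P.tensor f g) := by
  subst hm; subst hn; subst hk; subst hl; rfl

theorem tensor_congr {m n m' n' k l k' l' : ℕ} (h1 : m = k) (h2 : n = l) (h3 : m' = k')
    (h4 : n' = l') {f : P.Hom m n} {f' : P.Hom m' n'} {g : P.Hom k l} {g' : P.Hom k' l'}
    (Hf : HEq f g) (Hg : HEq f' g') : HEq (P.tensor f f') (P.tensor g g') := by
  subst h1; subst h2; subst h3; subst h4; rw [eq_of_heq Hf, eq_of_heq Hg]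

/-- `f` sandwiched between identities: `1_a ⊗ f ⊗ 1_b`. -/
def sw (a b : ℕ) {c : ℕ} (f : P.Hom c c) : P.Hom (a + c + b) (a + c + b) :=
  P.tensor (P.tensor (P.id a) f) (P.id b)

theorem sw_id (a b c : ℕ) : sw a b (P.id c) = P.id (a + c + b) := by
  rw [sw, P.tensor_id, P.tensor_id]

theorem sw_comp (a b : ℕ) {c : ℕ} (f g : P.Hom c c) :
    P.comp (sw a b f) (sw a b g) = sw a b (P.comp f g) := by
  rw [sw, sw, sw, ← P.tensor_comp, ← P.tensor_comp]
  simp only [P.id_comp]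

theorem sw_ext {a a' b b' c : ℕ} (ha : a = a') (hb : b = b') (f : P.Hom c c)
    (h h' : a + c + b = a' + c + b') : rc h h' (sw a b f) = sw a' b' f := by
  subst ha; subst hb; rfl

theorem sw_rc {a b c c' : ℕ} (h h' : c = c') (f : P.Hom c c) :
    sw a b (rc h h' f) = rc (by rw [h]) (by rw [h]) (sw a b f) := by
  subst h; rfl

theorem sw_nest (a b a' b' : ℕ) {c : ℕ} (f : P.Hom c c)
    (h h' : a + (a' + c + b') + b = (a + a') + c + (b' + b)) :
    rc h h' (sw a b (sw a' b' f)) = sw (a + a') (b' + b) f := by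
  apply rc_eq_of_heq
  show HEq (P.tensor (P.tensor (P.id a) (P.tensor (P.tensor (P.id a') f) (P.id b'))) (P.id b)) _
  have h2 : HEq (P.tensor (P.id a) (P.tensor (P.id a') f))
      (P.tensor (P.id (a + a')) f) := by
    rw [← P.tensor_id a a']
    exact (P.tensor_assoc _ _ _).symm
  have h1 : HEq (P.tensor (P.id a) (P.tensor (P.tensor (P.id a') f) (P.id b')))
      (P.tensor (P.tensor (P.id (a + a')) f) (P.id b')) := by
    refine HEq.trans ?_ (tensor_congr (by omega) (by omega) rfl rfl h2 HEq.rfl)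
    exact (P.tensor_assoc _ _ _).symm
  refine HEq.trans (tensor_congr (by omega) (by omega) rfl rfl h1 HEq.rfl) ?_
  refine HEq.trans (P.tensor_assoc _ _ _) (heq_of_eq ?_)
  show _ = P.tensor (P.tensor (P.id (a + a')) f) (P.id (b' + b))
  rw [P.tensor_id]

theorem rc_sw_ext {a a' b b' c N N' : ℕ} (ha : a = a') (hb : b = b') (f : P.Hom c c)
    (h1 : a + c + b = N) (h2 : a + c + b = N') (h3 : a' + c + b' = N)
    (h4 : a' + c + b' = N') : rc h1 h2 (sw a b f) = rc h3 h4 (sw a' b' f) := by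
  subst ha; subst hb; rfl

theorem rc_sw_nest (a b a' b' : ℕ) {c N N' : ℕ} (f : P.Hom c c)
    (h1 : a + (a' + c + b') + b = N) (h2 : a + (a' + c + b') + b = N')
    (h3 : (a + a') + c + (b' + b) = N) (h4 : (a + a') + c + (b' + b) = N') :
    rc h1 h2 (sw a b (sw a' b' f)) = rc h3 h4 (sw (a + a') (b' + b) f) := by
  have := sw_nest (P := P) a b a' b' f (by omega) (by omega)
  have h5 := rc_inv _ _ this
  rw [h5, rc_rc]

/-- the generator `1_i ⊗ σ ⊗ 1_{n-i-2}` as an endomorphism of `n` (identity if out of range) -/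
def gc (P : PROP) (n i : ℕ) : P.Hom n n :=
  if h : i + 2 ≤ n then
    rc (by omega) (by omega) (sw i (n - (i + 2)) (P.braid 1 1))
  else P.id n

theorem gc_pos {n i : ℕ} (h : i + 2 ≤ n) :
    gc P n i = rc (by omega) (by omega) (sw i (n - (i + 2)) (P.braid 1 1)) := dif_pos h

theorem gc_neg {n i : ℕ} (h : ¬ i + 2 ≤ n) : gc P n i = P.id n := dif_neg h

theorem gc_invol (n i : ℕ) : P.comp (gc P n i) (gc P n i) = P.id n := by
  by_cases h : i + 2 ≤ n
  · rw [gc_pos h, rc_comp, sw_comp, P.braid_braid, sw_id, rc_id]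
  · rw [gc_neg h, P.id_comp]

theorem core2 (d : ℕ) :
    P.comp (sw 0 (d + 2) (P.braid 1 1)) (sw (2 + d) 0 (P.braid 1 1))
      = P.comp (sw (2 + d) 0 (P.braid 1 1)) (sw 0 (d + 2) (P.braid 1 1)) := by
  have hA : sw 0 (d + 2) (P.braid 1 1)
      = P.tensor (P.tensor (P.braid 1 1) (P.id d)) (P.id 2) := by
    have h1 : HEq (P.tensor (P.tensor (P.id 0) (P.braid 1 1)) (P.id (d + 2)))
        (P.tensor (P.braid 1 1) (P.id (d + 2))) :=
      tensor_congr (by omega) (by omega) rfl rfl (P.tensor_unit_left _) HEq.rfl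
    have h2 : HEq (P.tensor (P.braid 1 1) (P.id (d + 2)))
        (P.tensor (P.tensor (P.braid 1 1) (P.id d)) (P.id 2)) := by
      rw [← P.tensor_id d 2]
      exact (P.tensor_assoc _ _ _).symm
    exact eq_of_heq (h1.trans h2)
  have hB : sw (2 + d) 0 (P.braid 1 1) = P.tensor (P.id (2 + d)) (P.braid 1 1) := by
    rw [sw, P.tensor_unit_right]
  rw [hA, hB, ← P.tensor_comp, ← P.tensor_comp]
  simp only [P.comp_id, P.id_comp]

theorem gc_comm {n i j : ℕ} (hij : i + 2 ≤ j) :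
    P.comp (gc P n i) (gc P n j) = P.comp (gc P n j) (gc P n i) := by
  by_cases hj : j + 2 ≤ n
  · have hi : i + 2 ≤ n := by omega
    have hgi : gc P n i = rc (by omega) (by omega)
        (sw i (n - (j + 2)) (sw 0 ((j - (i + 2)) + 2) (P.braid 1 1))) := by
      rw [gc_pos hi, rc_sw_nest i (n - (j+2)) 0 ((j - (i+2)) + 2) (P.braid 1 1)
        (by omega) (by omega) (by omega) (by omega)]
      exact rc_sw_ext (by omega) (by omega) _ _ _ _ _
    have hgj : gc P n j = rc (by omega) (by omega)
        (sw i (n - (j + 2)) (sw (2 + (j - (i + 2))) 0 (P.braid 1 1))) := by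
      rw [gc_pos hj, rc_sw_nest i (n - (j+2)) (2 + (j - (i+2))) 0 (P.braid 1 1)
        (by omega) (by omega) (by omega) (by omega)]
      exact rc_sw_ext (by omega) (by omega) _ _ _ _ _
    rw [hgi, hgj, rc_comp, rc_comp, sw_comp, sw_comp, core2]
  · rw [gc_neg hj, P.comp_id, P.id_comp]

theorem yb3 : P.comp (sw 0 1 (P.braid 1 1))
      (P.comp (sw 1 0 (P.braid 1 1)) (sw 0 1 (P.braid 1 1)))
    = P.comp (sw 1 0 (P.braid 1 1))
      (P.comp (sw 0 1 (P.braid 1 1)) (sw 1 0 (P.braid 1 1))) := by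
  have hA' : sw 0 1 (P.braid 1 1) = P.tensor (P.braid 1 1) (P.id 1) := by
    rw [sw]
    exact eq_of_heq (tensor_congr (by omega) (by omega) rfl rfl (P.tensor_unit_left _) HEq.rfl)
  have hB' : sw 1 0 (P.braid 1 1) = P.tensor (P.id 1) (P.braid 1 1) := by
    rw [sw, P.tensor_unit_right]
  have e1 : (cast (by rw [Nat.add_assoc]) (P.tensor (P.braid 1 1) (P.id 1)) :
      P.Hom (1 + (1 + 1)) ((1 + 1) + 1)) = sw 0 1 (P.braid 1 1) := by
    rw [hA']; exact eq_of_heq (cast_heq _ _)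
  have e2 : (cast (by rw [Nat.add_assoc 1 1 1, Nat.add_assoc 1 1 1])
      (P.tensor (P.id 1) (P.braid 1 1)) : P.Hom ((1 + 1) + 1) ((1 + 1) + 1))
      = sw 1 0 (P.braid 1 1) := by
    rw [hB']; exact eq_of_heq (cast_heq _ _)
  have hAB : P.comp (sw 0 1 (P.braid 1 1)) (sw 1 0 (P.braid 1 1)) = P.braid 1 (1 + 1) := by
    rw [P.braid_hexagon 1 1 1, e1, e2]
  have hAA : P.comp (sw 0 1 (P.braid 1 1)) (sw 0 1 (P.braid 1 1)) = P.id (0 + (1+1) + 1) := by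
    rw [sw_comp, P.braid_braid, sw_id]
  have hBB : P.comp (sw 1 0 (P.braid 1 1)) (sw 1 0 (P.braid 1 1)) = P.id (1 + (1+1) + 0) := by
    rw [sw_comp, P.braid_braid, sw_id]
  have hBA : P.braid (1 + 1) 1
      = P.comp (sw 1 0 (P.braid 1 1)) (sw 0 1 (P.braid 1 1)) := by
    have h1 : P.comp (P.comp (sw 1 0 (P.braid 1 1)) (sw 0 1 (P.braid 1 1)))
        (P.comp (P.braid 1 (1 + 1)) (P.braid (1 + 1) 1))
        = P.comp (P.comp (sw 1 0 (P.braid 1 1)) (sw 0 1 (P.braid 1 1)))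
          (P.id (1 + (1 + 1))) := by rw [P.braid_braid 1 (1 + 1)]
    rw [← hAB] at h1
    calc P.braid (1 + 1) 1
        = P.comp (P.comp (sw 1 0 (P.braid 1 1)) (sw 0 1 (P.braid 1 1)))
            (P.id (1 + (1 + 1))) := by
          rw [← h1]
          simp only [P.assoc]
          rw [← P.assoc (sw 0 1 (P.braid 1 1)) (sw 0 1 (P.braid 1 1)), hAA, P.id_comp,
            ← P.assoc (sw 1 0 (P.braid 1 1)) (sw 1 0 (P.braid 1 1)), hBB, P.id_comp]
      _ = _ := P.comp_id _
  have nat : P.comp (P.tensor (P.braid 1 1) (P.id 1)) (P.braid (1 + 1) 1)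
      = P.comp (P.braid (1 + 1) 1) (P.tensor (P.id 1) (P.braid 1 1)) :=
    P.braid_natural (P.braid 1 1) (P.id 1)
  rw [← hA', ← hB', hBA] at nat
  rw [nat, P.assoc]

theorem gc_yb {n i : ℕ} (h : i + 3 ≤ n) :
    P.comp (gc P n i) (P.comp (gc P n (i+1)) (gc P n i))
      = P.comp (gc P n (i+1)) (P.comp (gc P n i) (gc P n (i+1))) := by
  have hi : i + 2 ≤ n := by omega
  have hi1 : (i+1) + 2 ≤ n := by omega
  have hgi : gc P n i = rc (by omega) (by omega)
      (sw i (n - (i + 3)) (sw 0 1 (P.braid 1 1))) := by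
    rw [gc_pos hi, rc_sw_nest i (n - (i+3)) 0 1 (P.braid 1 1)
      (by omega) (by omega) (by omega) (by omega)]
    exact rc_sw_ext (by omega) (by omega) _ _ _ _ _
  have hgi1 : gc P n (i+1) = rc (by omega) (by omega)
      (sw i (n - (i + 3)) (sw 1 0 (P.braid 1 1))) := by
    rw [gc_pos hi1, rc_sw_nest i (n - (i+3)) 1 0 (P.braid 1 1)
      (by omega) (by omega) (by omega) (by omega)]
    exact rc_sw_ext (by omega) (by omega) _ _ _ _ _
  rw [hgi, hgi1, rc_comp, rc_comp, rc_comp, rc_comp, sw_comp, sw_comp, sw_comp, sw_comp, yb3]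

/-- word `g_0 g_1 ⋯ g_{p-1}` realizing the rotation moving wire 0 to position p -/
def rot (P : PROP) (n : ℕ) : ℕ → P.Hom n n
  | 0 => P.id n
  | p+1 => P.comp (rot P n p) (gc P n p)

/-- word `g_1 g_2 ⋯ g_q` -/
def trot (P : PROP) (n : ℕ) : ℕ → P.Hom n n
  | 0 => P.id n
  | q+1 => P.comp (trot P n q) (gc P n (q+1))

theorem rot_lf (n : ℕ) : ∀ k, rot P n (k+1) = P.comp (gc P n 0) (trot P n k) := by
  intro k
  induction k with
  | zero => show P.comp (P.id n) (gc P n 0) = P.comp (gc P n 0) (P.id n)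
            rw [P.id_comp, P.comp_id]
  | succ k ih =>
      show P.comp (rot P n (k+1)) (gc P n (k+1)) = _
      rw [ih, P.assoc]; rfl

theorem gc_rot_comm {n k j : ℕ} (h : k + 1 ≤ j) :
    P.comp (gc P n j) (rot P n k) = P.comp (rot P n k) (gc P n j) := by
  induction k with
  | zero => show P.comp _ (P.id n) = P.comp (P.id n) _
            rw [P.id_comp, P.comp_id]
  | succ k ih =>
      show P.comp (gc P n j) (P.comp (rot P n k) (gc P n k)) = _
      rw [← P.assoc, ih (by omega), P.assoc, ← gc_comm (by omega : k + 2 ≤ j), ← P.assoc]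
      rfl

theorem gc_rot_slide {n i m : ℕ} (him : i + 2 ≤ m) (hm : m + 1 ≤ n) :
    P.comp (gc P n (i+1)) (rot P n m) = P.comp (rot P n m) (gc P n i) := by
  induction m with
  | zero => omega
  | succ m ih =>
      show P.comp (gc P n (i+1)) (P.comp (rot P n m) (gc P n m)) = _
      by_cases hc : i + 2 ≤ m
      · rw [← P.assoc, ih hc (by omega), P.assoc, gc_comm (by omega : i + 2 ≤ m), ← P.assoc]
        rfl
      · have : m = i + 1 := by omega
        subst this
        show P.comp (gc P n (i+1)) (P.comp (P.comp (rot P n i) (gc P n i)) (gc P n (i+1))) = _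
        simp only [← P.assoc]
        rw [gc_rot_comm (by omega : i + 1 ≤ i + 1)]
        simp only [P.assoc]
        rw [← gc_yb (by omega : i + 3 ≤ n)]
        show _ = P.comp (P.comp (P.comp (rot P n i) (gc P n i)) (gc P n (i+1))) (gc P n i)
        simp only [P.assoc]

theorem word_ma {n p : ℕ} : ∀ q, q ≤ p → p + 2 ≤ n →
    P.comp (gc P n 0) (P.comp (trot P n q) (rot P n (p+1)))
      = P.comp (trot P n p) (rot P n q) := by
  intro q
  induction q with
  | zero =>
      intro _ hp
      show P.comp (gc P n 0) (P.comp (P.id n) _) = P.comp _ (P.id n)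
      rw [P.id_comp, P.comp_id, rot_lf, ← P.assoc, gc_invol, P.id_comp]
  | succ q ih =>
      intro hq hp
      show P.comp (gc P n 0) (P.comp (P.comp (trot P n q) (gc P n (q+1))) (rot P n (p+1))) = _
      rw [P.assoc (trot P n q), gc_rot_slide (by omega : q + 2 ≤ p + 1) (by omega),
        ← P.assoc (trot P n q), ← P.assoc, ih (by omega) hp, P.assoc]
      rfl

theorem word_mb {n q : ℕ} : ∀ p, p ≤ q → q + 2 ≤ n →
    P.comp (gc P n 0) (P.comp (trot P n q) (rot P n p))
      = P.comp (trot P n p) (rot P n (q+1)) := by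
  intro p
  induction p with
  | zero =>
      intro _ hq
      show P.comp (gc P n 0) (P.comp (trot P n q) (P.id n)) = P.comp (P.id n) _
      rw [P.comp_id, P.id_comp, rot_lf]
  | succ p ih =>
      intro hp hq
      show P.comp (gc P n 0) (P.comp (trot P n q) (P.comp (rot P n p) (gc P n p))) = _
      rw [← P.assoc (trot P n q), ← P.assoc, ih (by omega) hq]
      show _ = P.comp (P.comp (trot P n p) (gc P n (p+1))) (rot P n (q+1))
      rw [P.assoc, P.assoc, gc_rot_slide (by omega : p + 2 ≤ q + 1) (by omega)]

/-- shift: `1₁ ⊗ f`, recast to live on `n+1` wires -/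
def sh {n : ℕ} (f : P.Hom n n) : P.Hom (n+1) (n+1) :=
  rc (by omega) (by omega) (sw 1 0 f)

theorem sh_id (n : ℕ) : sh (P.id n) = P.id (n+1) := by rw [sh, sw_id, rc_id]

theorem sh_comp {n : ℕ} (f g : P.Hom n n) : sh (P.comp f g) = P.comp (sh f) (sh g) := by
  rw [sh, sh, sh, rc_comp, sw_comp]

theorem sh_gc (n i : ℕ) : sh (gc P n i) = gc P (n+1) (i+1) := by
  by_cases h : i + 2 ≤ n
  · rw [gc_pos h, sh, sw_rc, rc_rc,
      rc_sw_nest 1 0 i (n - (i+2)) (P.braid 1 1) (by omega) (by omega) (by omega) (by omega),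
      gc_pos (by omega : (i+1) + 2 ≤ n + 1)]
    exact rc_sw_ext (by omega) (by omega) _ _ _ _ _
  · rw [gc_neg h, sh_id, gc_neg (by omega)]

theorem sh_trot (n : ℕ) : ∀ q, sh (rot P n q) = trot P (n+1) q := by
  intro q
  induction q with
  | zero => exact sh_id n
  | succ q ih =>
      show sh (P.comp (rot P n q) (gc P n q)) = P.comp (trot P (n+1) q) (gc P (n+1) (q+1))
      rw [sh_comp, ih, sh_gc]

theorem sh_sh {n : ℕ} (f : P.Hom n n) :
    sh (sh f) = rc (by omega) (by omega) (sw 2 0 f) := by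
  rw [sh, sh, sw_rc, rc_rc,
    rc_sw_nest 1 0 1 0 f (by omega) (by omega) (by omega) (by omega)]

theorem core0 {n : ℕ} (f : P.Hom n n) :
    P.comp (sw 0 n (P.braid 1 1)) (sw 2 0 f) = P.comp (sw 2 0 f) (sw 0 n (P.braid 1 1)) := by
  have hA : sw 0 n (P.braid 1 1) = P.tensor (P.braid 1 1) (P.id n) := by
    rw [sw]
    exact eq_of_heq (tensor_congr (by omega) (by omega) rfl rfl (P.tensor_unit_left _) HEq.rfl)
  have hB : sw 2 0 f = P.tensor (P.id 2) f := by rw [sw, P.tensor_unit_right]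
  rw [hA, hB, ← P.tensor_comp, ← P.tensor_comp]
  simp only [P.comp_id, P.id_comp]

theorem comm0 {n : ℕ} (f : P.Hom n n) :
    P.comp (gc P (n+2) 0) (sh (sh f)) = P.comp (sh (sh f)) (gc P (n+2) 0) := by
  have h0 : gc P (n+2) 0 = rc (by omega) (by omega) (sw 0 n (P.braid 1 1)) := by
    rw [gc_pos (by omega : 0 + 2 ≤ n + 2)]
    exact rc_sw_ext (by omega) (by omega) _ _ _ _ _
  rw [h0, sh_sh, rc_comp, rc_comp, core0]

theorem gcT {m i : ℕ} (k : ℕ) (h : i + 2 ≤ m) :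
    P.tensor (gc P m i) (P.id k) = gc P (m+k) i := by
  rw [gc_pos h, gc_pos (by omega : i + 2 ≤ m + k)]
  rw [show P.id k = rc rfl rfl (P.id k) from rfl, rc_tensor]
  have hh : HEq (sw i ((m - (i+2)) + k) (P.braid 1 1))
      (P.tensor (sw i (m - (i+2)) (P.braid 1 1)) (P.id k)) := by
    simp only [sw]
    rw [← P.tensor_id (m - (i+2)) k]
    exact (P.tensor_assoc _ _ _).symm
  have inner : P.tensor (sw i (m - (i+2)) (P.braid 1 1)) (P.id k)
      = rc (by omega) (by omega) (sw i ((m - (i+2)) + k) (P.braid 1 1)) :=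
    (rc_eq_of_heq _ _ hh).symm
  rw [inner, rc_rc]
  exact rc_sw_ext (by omega) (by omega) _ _ _ _ _

theorem gcT' {k j : ℕ} (m : ℕ) (h : j + 2 ≤ k) :
    P.tensor (P.id m) (gc P k j) = gc P (m+k) (m+j) := by
  rw [gc_pos h, gc_pos (by omega : (m+j) + 2 ≤ m + k)]
  rw [show P.id m = rc rfl rfl (P.id m) from rfl, rc_tensor]
  have inner : P.tensor (P.id m) (sw j (k - (j+2)) (P.braid 1 1))
      = sw m 0 (sw j (k - (j+2)) (P.braid 1 1)) := by
    conv_rhs => rw [sw]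
    rw [P.tensor_unit_right]
  rw [inner,
    rc_sw_nest m 0 j (k - (j+2)) (P.braid 1 1) (by omega) (by omega) (by omega) (by omega)]
  exact rc_sw_ext (by omega) (by omega) _ _ _ _ _

/-! ### permutation calculus -/

/-- the adjacent transposition as a permutation of `Fin n` (identity if out of range) -/
def swp (n i : ℕ) : Equiv.Perm (Fin n) :=
  if h : i + 1 < n then Equiv.swap ⟨i, by omega⟩ ⟨i + 1, h⟩ else Equiv.refl _

theorem swp_neg {n i : ℕ} (h : ¬ i + 1 < n) : swp n i = Equiv.refl _ := dif_neg h

/-- value of a permutation, as a function on `ℕ` -/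
def eV {n : ℕ} (e : Equiv.Perm (Fin n)) (v : ℕ) : ℕ :=
  if h : v < n then (e ⟨v, h⟩).val else v

theorem eV_lt {n : ℕ} (e : Equiv.Perm (Fin n)) {v : ℕ} (h : v < n) :
    eV e v = (e ⟨v, h⟩).val := dif_pos h

theorem eV_val {n : ℕ} (e : Equiv.Perm (Fin n)) (x : Fin n) : (e x).val = eV e x.val := by
  rw [eV_lt e x.isLt]

theorem eV_lt_n {n : ℕ} (e : Equiv.Perm (Fin n)) {v : ℕ} (h : v < n) : eV e v < n := by
  rw [eV_lt e h]; exact (e ⟨v, h⟩).isLt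

theorem perm_ext_eV {n : ℕ} {a b : Equiv.Perm (Fin n)} (H : ∀ v, eV a v = eV b v) :
    a = b := by
  apply Equiv.ext; intro x
  apply Fin.ext
  rw [eV_val, eV_val, H]

theorem trans_eV {n : ℕ} (a b : Equiv.Perm (Fin n)) (v : ℕ) :
    eV (a.trans b) v = eV b (eV a v) := by
  by_cases h : v < n
  · rw [eV_lt _ h, Equiv.trans_apply, eV_val, eV_lt a h]
  · have ha : eV a v = v := by rw [eV, dif_neg h]
    have hb : eV b v = v := by rw [eV, dif_neg h]
    rw [eV, dif_neg h, ha, hb]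

theorem refl_eV {n : ℕ} (v : ℕ) : eV (Equiv.refl (Fin n)) v = v := by
  by_cases h : v < n
  · rw [eV_lt _ h]; rfl
  · rw [eV, dif_neg h]

theorem swp_eV {n i : ℕ} (h : i + 1 < n) (v : ℕ) :
    eV (swp n i) v = if v = i then i + 1 else if v = i + 1 then i else v := by
  by_cases hv : v < n
  · rw [eV_lt _ hv, swp, dif_pos h]
    simp only [Equiv.swap_apply_def, Fin.ext_iff]
    split_ifs <;> simp_all <;> omega
  · rw [eV, dif_neg hv]
    split_ifs <;> omega

/-- extend a permutation of `Fin n` to `Fin (n+1)` fixing `0` -/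
def spp {n : ℕ} (e : Equiv.Perm (Fin n)) : Equiv.Perm (Fin (n + 1)) :=
  Equiv.Perm.decomposeFin.symm (0, e)

theorem spp_zero {n : ℕ} (e : Equiv.Perm (Fin n)) : spp e 0 = 0 :=
  Equiv.Perm.decomposeFin_symm_apply_zero 0 e

theorem spp_succ {n : ℕ} (e : Equiv.Perm (Fin n)) (x : Fin n) :
    spp e x.succ = (e x).succ := by
  rw [spp, Equiv.Perm.decomposeFin_symm_apply_succ, Equiv.swap_self, Equiv.refl_apply]

theorem spp_eV {n : ℕ} (e : Equiv.Perm (Fin n)) (v : ℕ) :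
    eV (spp e) v = if v = 0 then 0 else if v ≤ n then eV e (v - 1) + 1 else v := by
  by_cases hv : v < n + 1
  · rcases v with _ | w
    · rw [if_pos rfl, eV_lt _ hv]
      have : (⟨0, hv⟩ : Fin (n+1)) = 0 := rfl
      rw [this, spp_zero]; rfl
    · rw [if_neg (by omega), if_pos (by omega), eV_lt _ hv, eV_lt _ (by omega : w + 1 - 1 < n)]
      have : (⟨w + 1, hv⟩ : Fin (n+1)) = (⟨w + 1 - 1, by omega⟩ : Fin n).succ := by
        apply Fin.ext; simp
      rw [this, spp_succ]
      rfl
  · rw [eV, dif_neg hv]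
    split_ifs <;> omega

theorem spp_refl {n : ℕ} : spp (Equiv.refl (Fin n)) = Equiv.refl _ := by
  apply perm_ext_eV; intro v
  simp only [spp_eV, refl_eV]
  split_ifs <;> omega

theorem spp_mult {n : ℕ} (a b : Equiv.Perm (Fin n)) :
    (spp a).trans (spp b) = spp (a.trans b) := by
  apply perm_ext_eV; intro v
  by_cases h0 : v = 0
  · subst h0; simp [trans_eV, spp_eV]
  by_cases hn : v ≤ n
  · have ha : eV a (v - 1) < n := eV_lt_n a (by omega)
    have hinner : eV (spp a) v = eV a (v - 1) + 1 := by rw [spp_eV, if_neg h0, if_pos hn]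
    rw [trans_eV, hinner, spp_eV, spp_eV, trans_eV, if_neg (by omega), if_pos (by omega),
      if_neg h0, if_pos hn, Nat.add_sub_cancel]
  · have hinner : eV (spp a) v = v := by rw [spp_eV, if_neg h0, if_neg hn]
    rw [trans_eV, hinner, spp_eV, spp_eV, trans_eV, if_neg h0, if_neg hn, if_neg h0, if_neg hn]

theorem spp_swp {n : ℕ} (i : ℕ) : spp (swp n i) = swp (n + 1) (i + 1) := by
  by_cases h : i + 1 < n
  · apply perm_ext_eV; intro v
    rw [spp_eV, swp_eV (by omega : (i+1) + 1 < n + 1)]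
    by_cases h0 : v = 0
    · rw [if_pos h0, if_neg (by omega), if_neg (by omega)]; omega
    by_cases hn : v ≤ n
    · rw [if_neg h0, if_pos hn, swp_eV h]
      split_ifs <;> omega
    · rw [if_neg h0, if_neg hn]
      split_ifs <;> omega
  · rw [swp_neg h, spp_refl, swp_neg (by omega)]

/-- the rotation `0 ↦ p, j ↦ j - 1 (1 ≤ j ≤ p)` as a word in adjacent transpositions -/
def rpp (n : ℕ) : ℕ → Equiv.Perm (Fin (n + 1))
  | 0 => Equiv.refl _
  | p + 1 => (rpp n p).trans (swp (n + 1) p)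

theorem rpp_eV (n : ℕ) : ∀ p, p ≤ n → ∀ v,
    eV (rpp n p) v = if n + 1 ≤ v then v else if v = 0 then p else if v ≤ p then v - 1 else v := by
  intro p
  induction p with
  | zero =>
      intro _ v
      simp only [rpp]
      rw [refl_eV]
      split_ifs <;> omega
  | succ p ih =>
      intro hp v
      simp only [rpp]
      rw [trans_eV, ih (by omega), swp_eV (by omega : p + 1 < n + 1)]
      split_ifs <;> omega

theorem spp_rpp_eV (m r : ℕ) (hr : r ≤ m) (v : ℕ) :
    eV (spp (rpp m r)) v
      = if v = 0 then 0 else if v = 1 then r + 1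
        else if v ≤ m + 1 then (if v ≤ r + 1 then v - 1 else v) else v := by
  rw [spp_eV, rpp_eV m r hr]
  split_ifs <;> first | omega | (exfalso; assumption)

theorem comp_eV (m r s : ℕ) (hr : r ≤ m) (hs : s ≤ m + 1) (v : ℕ) :
    eV ((spp (rpp m r)).trans (rpp (m+1) s)) v
      = if v = 0 then s
        else if v = 1 then (if r + 1 ≤ s then r else r + 1)
        else if v ≤ m + 1 then
          (if v ≤ r + 1 then (if v - 1 ≤ s then v - 2 else v - 1)
           else (if v ≤ s then v - 1 else v))
        else v := by
  rw [trans_eV, spp_rpp_eV m r hr, rpp_eV (m+1) s hs]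
  split_ifs <;> first | omega | (exfalso; assumption)

theorem relA {m p q : ℕ} (hq : q ≤ m) (hp : p ≤ m + 1) (h : q < p) :
    (swp (m+2) 0).trans ((spp (rpp m q)).trans (rpp (m+1) p))
      = (spp (rpp m (p-1))).trans (rpp (m+1) q) := by
  apply perm_ext_eV; intro v
  rw [trans_eV, swp_eV (show 0 + 1 < m + 2 by omega), comp_eV m q p hq hp,
    comp_eV m (p-1) q (by omega) (by omega)]
  split_ifs <;> first | omega | (exfalso; assumption)

theorem relB {m p q : ℕ} (hq : q ≤ m) (hp : p ≤ q) :
    (swp (m+2) 0).trans ((spp (rpp m q)).trans (rpp (m+1) p))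
      = (spp (rpp m p)).trans (rpp (m+1) (q+1)) := by
  apply perm_ext_eV; intro v
  rw [trans_eV, swp_eV (show 0 + 1 < m + 2 by omega), comp_eV m q p hq (by omega),
    comp_eV m p (q+1) (by omega) (by omega)]
  split_ifs <;> first | omega | (exfalso; assumption)

theorem swp0_comm {m : ℕ} (u : Equiv.Perm (Fin (m+2))) (h0 : eV u 0 = 0)
    (h1 : eV u 1 = 1) : (swp (m+2) 0).trans u = u.trans (swp (m+2) 0) := by
  have hinj : ∀ w w', w < m + 2 → w' < m + 2 → eV u w = eV u w' → w = w' := by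
    intro w w' hw hw' he
    rw [eV_lt _ hw, eV_lt _ hw'] at he
    have h2 : (⟨w, hw⟩ : Fin (m+2)) = ⟨w', hw'⟩ := u.injective (Fin.ext he)
    exact congrArg Fin.val h2
  apply perm_ext_eV; intro v
  simp only [trans_eV, swp_eV (show 0 + 1 < m + 2 by omega)]
  by_cases hv0 : v = 0
  · subst hv0
    rw [if_pos rfl, h1, h0, if_pos rfl]
  by_cases hv1 : v = 1
  · subst hv1
    rw [if_neg hv0, if_pos rfl, h0, h1, if_neg (by omega), if_pos rfl]
  · rw [if_neg hv0, if_neg hv1]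
    by_cases hv : v < m + 2
    · have e0 : ¬ eV u v = 0 := fun hc => hv0 (hinj v 0 hv (by omega) (by rw [hc, h0]))
      have e1 : ¬ eV u v = 1 := fun hc => hv1 (hinj v 1 hv (by omega) (by rw [hc, h1]))
      rw [if_neg e0, if_neg e1]
    · have : eV u v = v := by rw [eV, dif_neg hv]
      rw [this, if_neg hv0, if_neg hv1]

/-- block sum of permutations -/
def bs {m k : ℕ} (π : Equiv.Perm (Fin m)) (π' : Equiv.Perm (Fin k)) :
    Equiv.Perm (Fin (m + k)) :=
  Equiv.permCongr finSumFinEquiv (Equiv.sumCongr π π')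

theorem bs_eV {m k : ℕ} (π : Equiv.Perm (Fin m)) (π' : Equiv.Perm (Fin k)) (v : ℕ) :
    eV (bs π π') v
      = if v < m then eV π v else if v < m + k then m + eV π' (v - m) else v := by
  by_cases h1 : v < m
  · rw [eV_lt _ (show v < m + k by omega), if_pos h1, eV_lt _ h1]
    have hx : (⟨v, show v < m + k by omega⟩ : Fin (m + k)) = Fin.castAdd k ⟨v, h1⟩ := rfl
    rw [bs, Equiv.permCongr_apply, hx, finSumFinEquiv_symm_apply_castAdd,
      Equiv.sumCongr_apply, Sum.map_inl, finSumFinEquiv_apply_left]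
    rfl
  · by_cases h2 : v < m + k
    · rw [eV_lt _ h2, if_neg h1, if_pos h2, eV_lt _ (show v - m < k by omega)]
      have hx : (⟨v, h2⟩ : Fin (m + k)) = Fin.natAdd m ⟨v - m, by omega⟩ := by
        apply Fin.ext
        show v = m + (v - m)
        omega
      rw [bs, Equiv.permCongr_apply, hx, finSumFinEquiv_symm_apply_natAdd,
        Equiv.sumCongr_apply, Sum.map_inr, finSumFinEquiv_apply_right]
      rfl
    · rw [eV, dif_neg h2, if_neg h1, if_neg h2]

theorem bs_mult {m k : ℕ} (a b : Equiv.Perm (Fin m)) (a' b' : Equiv.Perm (Fin k)) :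
    bs (a.trans b) (a'.trans b') = (bs a a').trans (bs b b') := by
  rw [bs, bs, bs, ← Equiv.sumCongr_trans, ← Equiv.permCongr_trans]

theorem bs_refl {m k : ℕ} :
    bs (Equiv.refl (Fin m)) (Equiv.refl (Fin k)) = Equiv.refl _ := by
  rw [bs, Equiv.sumCongr_refl, Equiv.permCongr_refl]

theorem bs_swp_left {m k : ℕ} (i : ℕ) (h : i + 1 < m) :
    bs (swp m i) (Equiv.refl (Fin k)) = swp (m + k) i := by
  apply perm_ext_eV; intro v
  simp only [bs_eV, refl_eV, swp_eV h, swp_eV (show i + 1 < m + k by omega)]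
  split_ifs <;> omega

theorem bs_swp_right {m k : ℕ} (j : ℕ) (h : j + 1 < k) :
    bs (Equiv.refl (Fin m)) (swp k j) = swp (m + k) (m + j) := by
  apply perm_ext_eV; intro v
  simp only [bs_eV, refl_eV, swp_eV h, swp_eV (show (m + j) + 1 < m + k by omega)]
  split_ifs <;> omega

/-- the "rest" of a permutation of `Fin (n+1)` after removing the rotation taking
`0` to `π 0` -/
def eOf {n : ℕ} (π : Equiv.Perm (Fin (n+1))) : Equiv.Perm (Fin n) :=
  (Equiv.Perm.decomposeFin (π.trans (rpp n (eV π 0)).symm)).2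

theorem spp_eOf_aux {n : ℕ} (f : Equiv.Perm (Fin (n+1))) (h : f 0 = 0) :
    spp ((Equiv.Perm.decomposeFin f).2) = f := by
  have h2 := Equiv.Perm.decomposeFin.symm_apply_apply f
  have h1 : (Equiv.Perm.decomposeFin f).1 = 0 := by
    have h3 := Equiv.Perm.decomposeFin_symm_apply_zero
      (Equiv.Perm.decomposeFin f).1 (Equiv.Perm.decomposeFin f).2
    rw [Prod.mk.eta, h2, h] at h3
    exact h3.symm
  rw [spp, ← h1, Prod.mk.eta, h2]

theorem perm_decomp {n : ℕ} (π : Equiv.Perm (Fin (n+1))) :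
    π = (spp (eOf π)).trans (rpp n (eV π 0)) := by
  have hp : eV π 0 ≤ n := by
    have := eV_lt_n π (show 0 < n + 1 by omega); omega
  have h0 : (π.trans (rpp n (eV π 0)).symm) 0 = 0 := by
    rw [Equiv.trans_apply, Equiv.symm_apply_eq]
    apply Fin.ext
    rw [eV_val π, eV_val (rpp n (eV π 0)), rpp_eV n _ hp]
    show eV π 0 = if n + 1 ≤ (0 : Fin (n+1)).val then _ else _
    simp
  have key := spp_eOf_aux (π.trans (rpp n (eV π 0)).symm) h0
  show π = (spp ((Equiv.Perm.decomposeFin (π.trans (rpp n (eV π 0)).symm)).2)).trans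
    (rpp n (eV π 0))
  rw [key, Equiv.trans_assoc, Equiv.symm_trans_self, Equiv.trans_refl]

/-- the image of a permutation in the prop `P` -/
def Phi (P : PROP) : (n : ℕ) → Equiv.Perm (Fin n) → P.Hom n n
  | 0, _ => P.id 0
  | n+1, π => P.comp (sh (Phi P n (eOf π))) (rot P (n+1) (eV π 0))

theorem Phi_succ (n : ℕ) (π : Equiv.Perm (Fin (n+1))) :
    Phi P (n+1) π = P.comp (sh (Phi P n (eOf π))) (rot P (n+1) (eV π 0)) := rfl

theorem Phi_decomp {n : ℕ} (e : Equiv.Perm (Fin n)) {p : ℕ} (hp : p ≤ n) :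
    Phi P (n+1) ((spp e).trans (rpp n p)) = P.comp (sh (Phi P n e)) (rot P (n+1) p) := by
  have h0 : eV ((spp e).trans (rpp n p)) 0 = p := by
    rw [trans_eV, spp_eV, if_pos rfl, rpp_eV n p hp]
    split_ifs <;> omega
  have he : eOf ((spp e).trans (rpp n p)) = e := by
    show (Equiv.Perm.decomposeFin (((spp e).trans (rpp n p)).trans
      (rpp n (eV ((spp e).trans (rpp n p)) 0)).symm)).2 = e
    rw [h0, Equiv.trans_assoc, Equiv.self_trans_symm, Equiv.trans_refl]
    show (Equiv.Perm.decomposeFin (Equiv.Perm.decomposeFin.symm (0, e))).2 = e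
    rw [Equiv.apply_symm_apply]
  rw [Phi_succ, h0, he]

theorem rpp_succ_left (m p : ℕ) (hp : p ≤ m) :
    rpp (m+1) (p+1) = (swp (m+2) 0).trans (spp (rpp m p)) := by
  apply perm_ext_eV; intro v
  rw [rpp_eV (m+1) (p+1) (by omega), trans_eV, swp_eV (show 0 + 1 < m + 2 by omega),
    spp_rpp_eV m p hp]
  split_ifs <;> first | omega | (exfalso; assumption)

theorem Phi_refl (P : PROP) : ∀ n, Phi P n (Equiv.refl (Fin n)) = P.id n
  | 0 => rfl
  | n+1 => by
    have h : (Equiv.refl (Fin (n+1))) = (spp (Equiv.refl (Fin n))).trans (rpp n 0) := by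
      rw [spp_refl]; rfl
    rw [h, Phi_decomp _ (by omega : 0 ≤ n), Phi_refl P n, sh_id]
    show P.comp (P.id (n+1)) (P.id (n+1)) = P.id (n+1)
    rw [P.id_comp]

theorem Phi_swp_mul (P : PROP) : ∀ n (i : ℕ) (π : Equiv.Perm (Fin n)),
    Phi P n ((swp n i).trans π) = P.comp (gc P n i) (Phi P n π) := by
  intro n
  induction n with
  | zero =>
      intro i π
      rw [swp_neg (by omega), Equiv.refl_trans, gc_neg (by omega), P.id_comp]
  | succ n IH =>
      intro i π
      by_cases hr : i + 1 < n + 1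
      case neg => rw [swp_neg hr, Equiv.refl_trans, gc_neg (by omega), P.id_comp]
      have hpval : eV π 0 ≤ n := by
        have := eV_lt_n π (show 0 < n + 1 by omega); omega
      rcases i with _ | k
      · -- i = 0
        rcases n with _ | m
        · omega
        have hπ := perm_decomp π
        have hp : eV π 0 ≤ m + 1 := hpval
        have hq : eV (eOf π) 0 ≤ m := by
          have := eV_lt_n (eOf π) (show 0 < m + 1 by omega); omega
        have hEe := perm_decomp (eOf π)
        have hcomm : (swp (m+2) 0).trans (spp (spp (eOf (eOf π))))
            = (spp (spp (eOf (eOf π)))).trans (swp (m+2) 0) := by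
          apply swp0_comm
          · rw [spp_eV, if_pos rfl]
          · rw [spp_eV, if_neg (by omega), if_pos (by omega), spp_eV, if_pos rfl]
        by_cases hqp : eV (eOf π) 0 < eV π 0
        · -- case A
          have hperm : (swp (m+2) 0).trans π
              = (spp ((spp (eOf (eOf π))).trans (rpp m (eV π 0 - 1)))).trans
                (rpp (m+1) (eV (eOf π) 0)) := by
            conv_lhs => rw [hπ, hEe, ← spp_mult]
            rw [Equiv.trans_assoc, ← Equiv.trans_assoc (swp (m+2) 0), hcomm,
              Equiv.trans_assoc, relA hq hp hqp, ← Equiv.trans_assoc, spp_mult]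
          rw [hperm, Phi_decomp _ (by omega : eV (eOf π) 0 ≤ m + 1),
            Phi_decomp _ (by omega : eV π 0 - 1 ≤ m)]
          rw [Phi_succ (m+1) π, Phi_succ m (eOf π)]
          rw [sh_comp, sh_comp, sh_trot, sh_trot]
          have hw := word_ma (P := P) (n := m+1+1) (p := eV π 0 - 1) (eV (eOf π) 0)
            (by omega) (by omega)
          rw [show eV π 0 - 1 + 1 = eV π 0 from by omega] at hw
          simp only [← P.assoc]
          rw [comm0 (Phi P m (eOf (eOf π)))]
          simp only [P.assoc]
          rw [hw]
        · -- case B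
          have hperm : (swp (m+2) 0).trans π
              = (spp ((spp (eOf (eOf π))).trans (rpp m (eV π 0)))).trans
                (rpp (m+1) (eV (eOf π) 0 + 1)) := by
            conv_lhs => rw [hπ, hEe, ← spp_mult]
            rw [Equiv.trans_assoc, ← Equiv.trans_assoc (swp (m+2) 0), hcomm,
              Equiv.trans_assoc, relB hq (by omega), ← Equiv.trans_assoc, spp_mult]
          rw [hperm, Phi_decomp _ (by omega : eV (eOf π) 0 + 1 ≤ m + 1),
            Phi_decomp _ (by omega : eV π 0 ≤ m)]
          rw [Phi_succ (m+1) π, Phi_succ m (eOf π)]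
          rw [sh_comp, sh_comp, sh_trot, sh_trot]
          have hw := word_mb (P := P) (n := m+1+1) (q := eV (eOf π) 0) (eV π 0)
            (by omega) (by omega)
          simp only [← P.assoc]
          rw [comm0 (Phi P m (eOf (eOf π)))]
          simp only [P.assoc]
          rw [hw]
      · -- i = k+1
        have hπ := perm_decomp π
        have hperm : (swp (n+1) (k+1)).trans π
            = (spp ((swp n k).trans (eOf π))).trans (rpp n (eV π 0)) := by
          conv_lhs => rw [hπ]
          rw [← spp_swp, ← Equiv.trans_assoc, spp_mult]
        rw [hperm, Phi_decomp _ hpval, IH k (eOf π), sh_comp, sh_gc, P.assoc]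
        rw [Phi_succ n π]

theorem genInd : ∀ (n : ℕ) (motive : Equiv.Perm (Fin n) → Prop),
    motive (Equiv.refl _) →
    (∀ i π, motive π → motive ((swp n i).trans π)) → ∀ π, motive π := by
  intro n
  induction n with
  | zero =>
      intro motive h0 _ π
      have : π = Equiv.refl _ := Equiv.ext fun x => x.elim0
      rw [this]; exact h0
  | succ n IH =>
      intro motive h0 hstep
      have hsp : ∀ e : Equiv.Perm (Fin n), motive (spp e) := by
        intro e
        refine IH (fun e => motive (spp e)) ?_ ?_ e
        · show motive (spp (Equiv.refl (Fin n)))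
          rw [spp_refl]; exact h0
        · intro i ρ hρ
          show motive (spp ((swp n i).trans ρ))
          rw [← spp_mult, spp_swp]
          exact hstep (i+1) (spp ρ) hρ
      have hrot : ∀ p, p ≤ n → motive (rpp n p) := by
        intro p
        induction p with
        | zero => intro _; exact h0
        | succ p ihp =>
            intro hp
            rcases n with _ | m
            · omega
            rw [rpp_succ_left m p (by omega)]
            exact hstep 0 _ (hsp _)
      intro π
      have hpval : eV π 0 ≤ n := by
        have := eV_lt_n π (show 0 < n + 1 by omega); omega
      have key := IH (fun e => motive ((spp e).trans (rpp n (eV π 0)))) ?_ ?_ (eOf π)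
      · rw [perm_decomp π]; exact key
      · show motive ((spp (Equiv.refl _)).trans (rpp n (eV π 0)))
        rw [spp_refl, Equiv.refl_trans]
        exact hrot _ hpval
      · intro i ρ hρ
        show motive ((spp ((swp n i).trans ρ)).trans (rpp n (eV π 0)))
        rw [← spp_mult, spp_swp, Equiv.trans_assoc]
        exact hstep (i+1) _ hρ

theorem Phi_comp (P : PROP) (n : ℕ) (π₁ π₂ : Equiv.Perm (Fin n)) :
    Phi P n (π₁.trans π₂) = P.comp (Phi P n π₁) (Phi P n π₂) := by
  refine genInd n
    (fun π₁ => ∀ π₂, Phi P n (π₁.trans π₂) = P.comp (Phi P n π₁) (Phi P n π₂)) ?_ ?_ π₁ π₂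
  · intro π₂
    show Phi P n ((Equiv.refl _).trans π₂) = P.comp (Phi P n (Equiv.refl _)) (Phi P n π₂)
    rw [Equiv.refl_trans, Phi_refl, P.id_comp]
  · intro i ρ hρ π₂
    rw [Equiv.trans_assoc, Phi_swp_mul, Phi_swp_mul, hρ, P.assoc]

theorem Phi_swp (P : PROP) (n i : ℕ) : Phi P n (swp n i) = gc P n i := by
  have h := Phi_swp_mul P n i (Equiv.refl _)
  rw [Equiv.trans_refl, Phi_refl, P.comp_id] at h
  exact h

theorem tensor_left_comp {m k : ℕ} (f g : P.Hom k k) :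
    P.tensor (P.id m) (P.comp f g) = P.comp (P.tensor (P.id m) f) (P.tensor (P.id m) g) := by
  rw [← P.tensor_comp, P.id_comp]

theorem tensor_right_comp {m k : ℕ} (f g : P.Hom m m) :
    P.tensor (P.comp f g) (P.id k) = P.comp (P.tensor f (P.id k)) (P.tensor g (P.id k)) := by
  rw [← P.tensor_comp, P.id_comp]

theorem Phi_bs (P : PROP) (m k : ℕ) (π : Equiv.Perm (Fin m)) (π' : Equiv.Perm (Fin k)) :
    Phi P (m+k) (bs π π') = P.tensor (Phi P m π) (Phi P k π') := by
  refine genInd m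
    (fun π => ∀ π', Phi P (m+k) (bs π π') = P.tensor (Phi P m π) (Phi P k π')) ?_ ?_ π π'
  · intro π'
    refine genInd k (fun π' => Phi P (m+k) (bs (Equiv.refl _) π')
      = P.tensor (Phi P m (Equiv.refl _)) (Phi P k π')) ?_ ?_ π'
    · show Phi P (m+k) (bs (Equiv.refl _) (Equiv.refl _))
          = P.tensor (Phi P m (Equiv.refl _)) (Phi P k (Equiv.refl _))
      rw [bs_refl, Phi_refl, Phi_refl, Phi_refl, P.tensor_id]
    · intro j ρ hρ
      show Phi P (m+k) (bs (Equiv.refl _) ((swp k j).trans ρ))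
          = P.tensor (Phi P m (Equiv.refl _)) (Phi P k ((swp k j).trans ρ))
      by_cases hj : j + 1 < k
      case neg => rw [swp_neg hj, Equiv.refl_trans]; exact hρ
      have h1 : bs (Equiv.refl (Fin m)) ((swp k j).trans ρ)
          = (swp (m+k) (m+j)).trans (bs (Equiv.refl _) ρ) := by
        have h2 := bs_mult (Equiv.refl (Fin m)) (Equiv.refl (Fin m)) (swp k j) ρ
        rw [Equiv.refl_trans] at h2
        rw [h2, bs_swp_right j hj]
      rw [h1, Phi_swp_mul, hρ, Phi_refl, Phi_swp_mul]
      rw [tensor_left_comp, gcT' m (by omega : j + 2 ≤ k)]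
  · intro i ρ hρ π'
    show Phi P (m+k) (bs ((swp m i).trans ρ) π')
        = P.tensor (Phi P m ((swp m i).trans ρ)) (Phi P k π')
    by_cases hi : i + 1 < m
    case neg => rw [swp_neg hi, Equiv.refl_trans]; exact hρ π'
    have h1 : bs ((swp m i).trans ρ) π' = (swp (m+k) i).trans (bs ρ π') := by
      have h2 := bs_mult (swp m i) ρ (Equiv.refl (Fin k)) π'
      rw [Equiv.refl_trans] at h2
      rw [h2, bs_swp_left i hi]
    rw [h1, Phi_swp_mul, hρ π', Phi_swp_mul]
    conv_rhs => rw [show Phi P k π' = P.comp (P.id k) (Phi P k π') from (P.id_comp _).symm]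
    rw [P.tensor_comp, gcT k (by omega : i + 2 ≤ m)]

end PROP

open PROP in
/-- in any prop, the symmetries assemble permutations functorially: there is a
unique assignment `Φ` of a morphism `n → n` to each permutation of `n` elements which sends
the identity to the identity, is functorial for composition, sends block sums of
permutations to tensors, and sends each adjacent transposition to the corresponding
one-step braiding `1ᵢ ⊗ σ_{1,1} ⊗ 1ⱼ`.  (Uniqueness says in particular that any two ways of
writing a permutation as a product of adjacent transpositions give equal morphisms.) -/
theorem perm_to_prop_functorial (P : PROP) :
    ∃! Φ : (n : ℕ) → Equiv.Perm (Fin n) → P.Hom n n,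
      (∀ n, Φ n (Equiv.refl _) = P.id n) ∧
      (∀ n (π₁ π₂ : Equiv.Perm (Fin n)), Φ n (π₁.trans π₂) = P.comp (Φ n π₁) (Φ n π₂)) ∧
      (∀ m n (π : Equiv.Perm (Fin m)) (π' : Equiv.Perm (Fin n)),
        Φ (m + n) (Equiv.permCongr finSumFinEquiv (Equiv.sumCongr π π')) =
          P.tensor (Φ m π) (Φ n π')) ∧
      (∀ i j : ℕ, Φ (i + 2 + j) (adjSwap i j) =
        P.tensor (P.tensor (P.id i) (P.braid 1 1)) (P.id j)) := by
  have hAdj : ∀ i j : ℕ, adjSwap i j = swp (i+2+j) i := by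
    intro i j
    rw [swp, dif_pos (show i + 1 < i + 2 + j by omega)]
    rfl
  have hgcsw : ∀ i j : ℕ, gc P (i+2+j) i
      = P.tensor (P.tensor (P.id i) (P.braid 1 1)) (P.id j) := by
    intro i j
    rw [gc_pos (by omega : i + 2 ≤ i + 2 + j)]
    show rc _ _ (sw i (i+2+j - (i+2)) (P.braid 1 1)) = sw i j (P.braid 1 1)
    exact sw_ext rfl (by omega) _ _ _
  refine ⟨fun n => Phi P n, ⟨fun n => Phi_refl P n, fun n => Phi_comp P n,
    fun m n => Phi_bs P m n,fun i j => ?_⟩, ?_⟩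
  · rw [hAdj i j]
    show Phi P (i+2+j) (swp (i+2+j) i) = _
    rw [Phi_swp, hgcsw]
  · intro Ψ ⟨u1, u2, u3, u4⟩
    funext n π
    have hswp : ∀ n i, Ψ n (swp n i) = gc P n i := by
      intro n i
      by_cases h : i + 1 < n
      · obtain ⟨j, rfl⟩ : ∃ j, n = i + 2 + j := ⟨n - (i+2), by omega⟩
        rw [← hAdj i j, u4 i j, hgcsw]
      · rw [swp_neg h, u1 n, gc_neg (by omega)]
    refine genInd n (fun π => Ψ n π = Phi P n π) ?_ ?_ π
    · show Ψ n (Equiv.refl _) = Phi P n (Equiv.refl _)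
      rw [u1, Phi_refl]
    · intro i ρ hρ
      show Ψ n ((swp n i).trans ρ) = Phi P n ((swp n i).trans ρ)
      rw [u2 n (swp n i) ρ, hswp, hρ, Phi_swp_mul]
end
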